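/- arXiv:1907.07424 — 7 statements merged into one kernel-verified Lean document; each statement's English description precedes it below -/
import Mathlib

section
/- Let X be a nonempty compact metrizable topological space and let ψ : X → X be a minimal homeomorphism (i.e., every orbit {ψ^n(x) : n ∈ ℤ} is dense in X). Then (X,ψ) is a factor of a minimal Cantor system: there exist a Cantor space M, a minimal homeomorphism σ : M → M, and a continuous surjection p : M → X such that p ∘ σ = ψ ∘ p. -/
/-- The group of self-homeomorphisms of a topological space, under composition. -/
instance homeoGroup {X : Type*} [TopologicalSpace X] : Group (X ≃ₜ X) where
  mul a b := b.trans a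
  one := Homeomorph.refl X
  inv := Homeomorph.symm
  mul_assoc a b c := rfl
  one_mul a := Homeomorph.ext fun _ => rfl
  mul_one a := Homeomorph.ext fun _ => rfl
  inv_mul_cancel a := Homeomorph.ext fun x => a.symm_apply_apply x

@[simp] lemma homeo_mul_apply {X : Type*} [TopologicalSpace X] (f g : X ≃ₜ X) (x : X) :
    (f * g) x = f (g x) := rfl

@[simp] lemma homeo_one_apply {X : Type*} [TopologicalSpace X] (x : X) :
    (1 : X ≃ₜ X) x = x := rfl

lemma homeo_zpow_add_apply {X : Type*} [TopologicalSpace X] (φ : X ≃ₜ X) (a b : ℤ) (x : X) :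
    (φ ^ (a + b)) x = (φ ^ a) ((φ ^ b) x) := by
  rw [zpow_add]; rfl

/-- A *Cantor space* is a topological space homeomorphic to `{0,1}^ℕ`. -/
def IsCantorSpace (X : Type*) [TopologicalSpace X] : Prop :=
  Nonempty (X ≃ₜ (ℕ → Bool))

/-- A homeomorphism is *minimal* if every `ℤ`-orbit `{φ^n x : n ∈ ℤ}` is dense. -/
def IsMinimalHomeo {X : Type*} [TopologicalSpace X] (φ : X ≃ₜ X) : Prop :=
  ∀ x : X, Dense (Set.range fun n : ℤ => (φ ^ n) x)

/-!
Cover `X` by the Cantor space, `q : 2^ℕ → X` (Hausdorff–Alexandroff). The bi-infinite sequences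
`(cₙ)` in `2^ℕ` with `q c₍ₙ₊₁₎ = ψ (q cₙ)` form a closed shift-invariant subset of
`(2^ℕ)^ℤ ≅ 2^ℕ`, on which `c ↦ q c₀` intertwines the shift with `ψ`. A minimal subsystem `M`
(Zorn) maps onto `X` because `ψ` is minimal. If `X` is infinite, so is `M`, and an infinite
minimal system has no isolated points; so `M` is a nonempty compact perfect subspace of the
Cantor space, hence a Cantor space (Brouwer): the bits of a point at the successive branching
levels of the tree of prefixes of `M` give the homeomorphism. A finite `X` is first replaced by
the infinite minimal system `X × ℝ/ℤ` with `ψ × (rotation by √2)`, of which it is a factor.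
-/

open Function Set Topology

section Minimality

variable {X : Type*} [TopologicalSpace X]

lemma homeo_zpow_add_one_apply (φ : X ≃ₜ X) (n : ℤ) (x : X) :
    (φ ^ (n + 1)) x = φ ((φ ^ n) x) := by
  rw [add_comm, homeo_zpow_add_apply, zpow_one]

lemma preimage_homeo_zpow_eq_self {φ : X ≃ₜ X} {s : Set X} (h : φ ⁻¹' s = s) (n : ℤ) :
    ⇑(φ ^ n) ⁻¹' s = s :=
  let stabilizer : Subgroup (X ≃ₜ X) :=
    { carrier := {g | ⇑g ⁻¹' s = s}
      mul_mem' := fun {a b} (ha : ⇑a ⁻¹' s = s) (hb : ⇑b ⁻¹' s = s) => by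
        change ⇑b ⁻¹' (⇑a ⁻¹' s) = s
        rw [ha, hb]
      one_mem' := rfl
      inv_mem' := fun {a} (ha : ⇑a ⁻¹' s = s) => by
        change ⇑a.symm ⁻¹' s = s
        rw [← ha, ← preimage_comp, a.self_comp_symm, preimage_id, ha] }
  stabilizer.zpow_mem h n

lemma preimage_range_homeo_zpow (φ : X ≃ₜ X) (x : X) :
    φ ⁻¹' range (fun n : ℤ => (φ ^ n) x) = range fun n : ℤ => (φ ^ n) x := by
  ext y
  constructor
  · rintro ⟨n, hn⟩
    refine ⟨n - 1, φ.injective ?_⟩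
    rw [← homeo_zpow_add_one_apply, sub_add_cancel]
    exact hn
  · rintro ⟨n, rfl⟩
    exact ⟨n + 1, homeo_zpow_add_one_apply φ n x⟩

theorem isMinimalHomeo_iff {φ : X ≃ₜ X} :
    IsMinimalHomeo φ ↔ ∀ s : Set X, IsClosed s → φ ⁻¹' s = s → s.Nonempty → s = univ := by
  constructor
  · rintro hφ s hs hinv ⟨x, hx⟩
    refine eq_univ_of_univ_subset ((hφ x).closure_eq ▸ closure_minimal ?_ hs)
    rintro _ ⟨n, rfl⟩
    exact (preimage_homeo_zpow_eq_self hinv n).symm.subset hx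
  · intro H x
    refine dense_iff_closure_eq.2 (H _ isClosed_closure ?_ ⟨x, subset_closure ⟨0, rfl⟩⟩)
    rw [φ.preimage_closure, preimage_range_homeo_zpow]

lemma IsMinimalHomeo.surjective_of_semiconj {M : Type*} [TopologicalSpace M] [CompactSpace M]
    [Nonempty M] [T2Space X] {ψ : X ≃ₜ X} (hψ : IsMinimalHomeo ψ) {σ : M ≃ₜ M} {p : M → X}
    (hpc : Continuous p) (hp : ∀ m, p (σ m) = ψ (p m)) : Surjective p := by
  refine range_eq_univ.1 (isMinimalHomeo_iff.1 hψ _ (isCompact_range hpc).isClosed ?_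
    (range_nonempty p))
  ext x
  constructor
  · rintro ⟨m, hm⟩
    refine ⟨σ.symm m, ψ.injective ?_⟩
    rw [← hp, σ.apply_symm_apply, hm]
  · rintro ⟨m, rfl⟩
    exact ⟨σ m, hp m⟩

theorem IsMinimalHomeo.perfectSpace [CompactSpace X] [Infinite X] {φ : X ≃ₜ X}
    (hφ : IsMinimalHomeo φ) : PerfectSpace X := by
  refine perfectSpace_iff_forall_not_isolated.2 fun x₀ => Filter.neBot_iff.2 fun hx₀ => ?_
  rw [← isOpen_singleton_iff_punctured_nhds] at hx₀
  have hdisc : ∀ x : X, IsOpen ({x} : Set X) := by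
    intro x
    obtain ⟨_, ⟨n, rfl⟩, hn⟩ := (hφ x).exists_mem_open hx₀ ⟨x₀, rfl⟩
    convert hx₀.preimage (φ ^ n).continuous
    ext y
    exact ((φ ^ n).injective.eq_iff' hn).symm
  have := discreteTopology_iff_isOpen_singleton.2 hdisc
  exact not_finite_iff_infinite.2 ‹_› finite_of_compact_of_discrete

end Minimality

section MinimalSubsystem

variable {Y : Type*} [TopologicalSpace Y] [CompactSpace Y]

theorem exists_minimal_closed_invariant (φ : Y ≃ₜ Y) {Ω : Set Y} (hΩ : IsClosed Ω)
    (hne : Ω.Nonempty) (hinv : φ ⁻¹' Ω = Ω) :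
    ∃ M ⊆ Ω, Minimal (fun A : Set Y => IsClosed A ∧ A.Nonempty ∧ φ ⁻¹' A = A) M := by
  refine zorn_superset_nonempty {A | IsClosed A ∧ A.Nonempty ∧ φ ⁻¹' A = A}
    (fun c hc hchain hcne => ⟨⋂₀ c, ⟨?_, ?_, ?_⟩, fun A hA => sInter_subset_of_mem hA⟩) Ω
    ⟨hΩ, hne, hinv⟩
  · exact isClosed_sInter fun A hA => (hc hA).1
  · have := hcne.to_subtype
    exact IsCompact.nonempty_sInter_of_directed_nonempty_isCompact_isClosed
      (fun A hA B hB => (hchain.total hA hB).elim (fun h => ⟨A, hA, subset_rfl, h⟩)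
        fun h => ⟨B, hB, h, subset_rfl⟩)
      (fun A hA => (hc hA).2.1) (fun A hA => (hc hA).1.isCompact) (fun A hA => (hc hA).1)
  · rw [preimage_sInter, sInter_eq_biInter]
    exact iInter₂_congr fun A hA => (hc hA).2.2

theorem exists_isMinimalHomeo_restrict (φ : Y ≃ₜ Y) {Ω : Set Y} (hΩ : IsClosed Ω)
    (hne : Ω.Nonempty) (hinv : φ ⁻¹' Ω = Ω) :
    ∃ (M : Set Y) (hM : M = φ ⁻¹' M), M ⊆ Ω ∧ IsClosed M ∧ M.Nonempty ∧
      IsMinimalHomeo (φ.sets hM) := by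
  obtain ⟨M, hMΩ, hMmin⟩ := exists_minimal_closed_invariant φ hΩ hne hinv
  obtain ⟨hMc, hMne, hMinv⟩ := hMmin.prop
  refine ⟨M, hMinv.symm, hMΩ, hMc, hMne, isMinimalHomeo_iff.2 fun s hs hsinv hsne => ?_⟩
  have himage : φ ⁻¹' (Subtype.val '' s) = Subtype.val '' s := by
    ext y
    constructor
    · rintro ⟨m, hm, hmy⟩
      have hy : y ∈ M := hMinv.subset (show φ y ∈ M from hmy ▸ m.2)
      have hσy : φ.sets hMinv.symm ⟨y, hy⟩ = m := Subtype.ext hmy.symm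
      refine ⟨⟨y, hy⟩, ?_, rfl⟩
      rw [← hsinv, mem_preimage, hσy]
      exact hm
    · rintro ⟨m, hm, rfl⟩
      exact ⟨_, hsinv.symm.subset hm, rfl⟩
  have hsM : Subtype.val '' s = M :=
    hMmin.eq_of_subset ⟨hMc.isClosedEmbedding_subtypeVal.isClosedMap s hs, hsne.image _,
      himage⟩ (Subtype.coe_image_subset M s)
  exact Subtype.val_injective.image_injective (hsM.trans (Subtype.coe_image_univ M).symm)

end MinimalSubsystem

lemma PiNat.isClosed_cylinder {E : ℕ → Type*} [∀ n, TopologicalSpace (E n)] [∀ n, T1Space (E n)]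
    (x : ∀ n, E n) (n : ℕ) : IsClosed (PiNat.cylinder x n) := by
  rw [PiNat.cylinder_eq_pi]
  exact isClosed_set_pi fun _ _ => isClosed_singleton

section Brouwer

open PiNat

def IsBranching (K : Set (ℕ → Bool)) (x : ℕ → Bool) (n : ℕ) : Prop :=
  ∀ b : Bool, ∃ z ∈ K ∩ cylinder x n, z n = b

noncomputable def branchCode (K : Set (ℕ → Bool)) (x : ℕ → Bool) (k : ℕ) : Bool :=
  x (Nat.nth (IsBranching K x) k)

variable {K : Set (ℕ → Bool)} {x y : ℕ → Bool}

lemma isBranching_congr {n : ℕ} (hy : y ∈ cylinder x n) :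
    IsBranching K y n ↔ IsBranching K x n := by
  rw [IsBranching, IsBranching, mem_cylinder_iff_eq.1 hy]

lemma isBranching_firstDiff (hx : x ∈ K) (hy : y ∈ K) (hne : x ≠ y) :
    IsBranching K x (firstDiff x y) := by
  intro b
  rcases Bool.eq_or_eq_not b (x (firstDiff x y)) with rfl | rfl
  · exact ⟨x, ⟨hx, self_mem_cylinder x _⟩, rfl⟩
  · exact ⟨y, ⟨hy, (mem_cylinder_comm x y _).2 (mem_cylinder_firstDiff x y)⟩,
      Bool.eq_not.2 (apply_firstDiff_ne hne).symm⟩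

lemma infinite_setOf_isBranching (hperf : ∀ n, ∃ z ∈ K ∩ cylinder x n, z ≠ x) (hx : x ∈ K) :
    {n | IsBranching K x n}.Infinite := by
  refine Set.infinite_of_forall_exists_gt fun n => ?_
  obtain ⟨z, ⟨hz, hzx⟩, hne⟩ := hperf (n + 1)
  refine ⟨firstDiff x z, isBranching_firstDiff hx hz hne.symm, ?_⟩
  rw [firstDiff_comm]
  exact (mem_cylinder_iff_le_firstDiff hne (n + 1)).1 hzx

open Classical in
lemma nth_isBranching_count {N : ℕ} (hN : IsBranching K x N) (hy : y ∈ cylinder x N) :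
    Nat.nth (IsBranching K y) (Nat.count (IsBranching K x) N) = N := by
  have hcount : Nat.count (IsBranching K y) N = Nat.count (IsBranching K x) N := by
    simp only [Nat.count_eq_card_filter_range]
    refine congrArg Finset.card (Finset.filter_congr fun i hi => isBranching_congr ?_)
    exact cylinder_anti x (Finset.mem_range.1 hi).le hy
  rw [← hcount]
  exact Nat.nth_count ((isBranching_congr hy).2 hN)

lemma nth_isBranching_eq_of_mem_cylinder (hx : {n | IsBranching K x n}.Infinite) {k : ℕ}
    (hy : y ∈ cylinder x (Nat.nth (IsBranching K x) k)) :
    Nat.nth (IsBranching K y) k = Nat.nth (IsBranching K x) k := by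
  classical
  simpa only [Nat.count_nth_of_infinite hx] using
    nth_isBranching_count (Nat.nth_mem_of_infinite hx k) hy

lemma branchCode_eq_of_mem_cylinder (hx : {n | IsBranching K x n}.Infinite) {k : ℕ}
    (hy : y ∈ cylinder x (Nat.nth (IsBranching K x) k + 1)) :
    branchCode K y k = branchCode K x k := by
  rw [branchCode, branchCode,
    nth_isBranching_eq_of_mem_cylinder hx (cylinder_anti x (Nat.le_succ _) hy)]
  exact hy _ (Nat.lt_succ_self _)

lemma branchCode_injOn : Set.InjOn (branchCode K) K := by
  classical
  intro x hx y hy hxy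
  by_contra hne
  set j := firstDiff x y
  have hj : IsBranching K x j := isBranching_firstDiff hx hy hne
  have hyj : y ∈ cylinder x j := (mem_cylinder_comm x y _).2 (mem_cylinder_firstDiff x y)
  have hcode := congrFun hxy (Nat.count (IsBranching K x) j)
  rw [branchCode, branchCode, nth_isBranching_count hj (self_mem_cylinder x j),
    nth_isBranching_count hj hyj] at hcode
  exact apply_firstDiff_ne hne hcode

lemma exists_branchCode_mem_cylinder (hbranch : ∀ x ∈ K, {n | IsBranching K x n}.Infinite)
    (hne : K.Nonempty) (t : ℕ → Bool) (k : ℕ) : ∃ x ∈ K, branchCode K x ∈ cylinder t k := by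
  classical
  induction k with
  | zero => exact hne.imp fun x hx => ⟨hx, by simp [cylinder_zero]⟩
  | succ k ih =>
    obtain ⟨x, hx, hxt⟩ := ih
    set N := Nat.nth (IsBranching K x) k
    obtain ⟨z, ⟨hz, hzx⟩, hzN⟩ := Nat.nth_mem_of_infinite (hbranch x hx) k (t k)
    refine ⟨z, hz, fun i hi => ?_⟩
    rcases Nat.lt_succ_iff_lt_or_eq.1 hi with hi | rfl
    · have hlt : Nat.nth (IsBranching K x) i < N := Nat.nth_strictMono (hbranch x hx) hi
      rw [branchCode_eq_of_mem_cylinder (hbranch x hx) (cylinder_anti x hlt hzx)]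
      exact hxt i hi
    · rw [branchCode, nth_isBranching_eq_of_mem_cylinder (hbranch x hx) hzx, hzN]

theorem isCantorSpace_of_isEmbedding {Y : Type*} [TopologicalSpace Y] [CompactSpace Y]
    [Nonempty Y] [PerfectSpace Y] {e : Y → ℕ → Bool} (he : IsEmbedding e) : IsCantorSpace Y := by
  have hnhds : ∀ a n, e ⁻¹' cylinder (e a) n ∈ 𝓝 a := fun a n =>
    he.continuous.continuousAt.preimage_mem_nhds
      ((isOpen_cylinder _ _ _).mem_nhds (self_mem_cylinder _ _))
  have hbranch : ∀ x ∈ range e, {n | IsBranching (range e) x n}.Infinite := by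
    rintro _ ⟨a, rfl⟩
    refine infinite_setOf_isBranching (fun n => ?_) (mem_range_self a)
    obtain ⟨b, hba, hb⟩ := Filter.nonempty_of_mem (inter_mem_nhdsWithin {a}ᶜ (hnhds a n))
    exact ⟨e b, ⟨mem_range_self b, hb⟩, he.injective.ne hba⟩
  set g : Y → ℕ → Bool := branchCode (range e) ∘ e
  have hg_cont : Continuous g := by
    refine continuous_pi fun k => IsLocallyConstant.continuous ?_
    refine (IsLocallyConstant.iff_eventually_eq _).2 fun a => ?_
    filter_upwards [hnhds a (Nat.nth _ k + 1)] with b hb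
    exact branchCode_eq_of_mem_cylinder (hbranch _ (mem_range_self a)) hb
  have hg_inj : Injective g := fun a b hab =>
    he.injective (branchCode_injOn (mem_range_self a) (mem_range_self b) hab)
  have hg_surj : Surjective g := by
    intro t
    have hclosed : ∀ k, IsClosed (g ⁻¹' cylinder t k) := fun k =>
      (isClosed_cylinder t k).preimage hg_cont
    have hnonempty : ∀ k, (g ⁻¹' cylinder t k).Nonempty := fun k => by
      obtain ⟨_, ⟨a, rfl⟩, ha⟩ := exists_branchCode_mem_cylinder hbranch (range_nonempty e) t k
      exact ⟨a, ha⟩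
    obtain ⟨a, ha⟩ := IsCompact.nonempty_iInter_of_sequence_nonempty_isCompact_isClosed
      (fun k => g ⁻¹' cylinder t k) (fun k => preimage_mono (cylinder_anti t k.le_succ))
      hnonempty (hclosed 0).isCompact hclosed
    exact ⟨a, funext fun i => mem_iInter.1 ha (i + 1) i i.lt_succ_self⟩
  exact ⟨hg_cont.homeoOfEquivCompactToT2 (f := Equiv.ofBijective g ⟨hg_inj, hg_surj⟩)⟩

end Brouwer

lemma homeo_prodCongr_zpow_apply {X Y : Type*} [TopologicalSpace X] [TopologicalSpace Y]
    (f : X ≃ₜ X) (g : Y ≃ₜ Y) (n : ℤ) (z : X × Y) :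
    (f.prodCongr g ^ n) z = ((f ^ n) z.1, (g ^ n) z.2) :=
  let prodHom : (X ≃ₜ X) × (Y ≃ₜ Y) →* (X × Y ≃ₜ X × Y) :=
    { toFun := fun fg => fg.1.prodCongr fg.2
      map_one' := rfl
      map_mul' := fun _ _ => rfl }
  congrArg (· z) (map_zpow prodHom (f, g) n).symm

lemma homeo_addLeft_zpow_apply {G : Type*} [TopologicalSpace G] [AddGroup G] [ContinuousAdd G]
    (a : G) (n : ℤ) (x : G) : (Homeomorph.addLeft a ^ n) x = n • a + x :=
  let addLeftHom : Multiplicative G →* (G ≃ₜ G) :=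
    { toFun := fun a => Homeomorph.addLeft a.toAdd
      map_one' := Homeomorph.ext zero_add
      map_mul' := fun _ _ => Homeomorph.ext fun _ => add_assoc _ _ _ }
  congrArg (· x) (map_zpow addLeftHom (.ofAdd a) n).symm

instance AddCircle.infinite (p : ℝ) [Fact (0 < p)] : Infinite (AddCircle p) :=
  have := Set.Ico.infinite (lt_add_of_pos_right 0 (Fact.out : 0 < p))
  Infinite.of_injective _ (AddCircle.equivIco p 0).symm.injective

section FiniteCase

variable {X : Type*} [TopologicalSpace X] [T1Space X] [Finite X]

lemma IsMinimalHomeo.exists_zpow_apply_eq {ψ : X ≃ₜ X} (hψ : IsMinimalHomeo ψ) (x y : X) :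
    ∃ k : ℤ, (ψ ^ k) x = y := by
  have horbit := (Set.toFinite (range fun n : ℤ => (ψ ^ n) x)).isClosed.closure_eq
  rw [(hψ x).closure_eq] at horbit
  exact horbit.subset (mem_univ y)

theorem IsMinimalHomeo.prodCongr_addLeft {ψ : X ≃ₜ X} (hψ : IsMinimalHomeo ψ) {p a : ℝ}
    (ha : Irrational (a / p)) :
    IsMinimalHomeo (ψ.prodCongr (Homeomorph.addLeft (a : AddCircle p))) := by
  have : Finite (X ≃ₜ X) := Finite.of_injective _ DFunLike.coe_injective
  set N := orderOf ψ
  have hN : ψ ^ (N : ℤ) = 1 := by rw [zpow_natCast, pow_orderOf_eq_one]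
  have hdense : DenseRange fun j : ℤ => j • (N • (a : AddCircle p)) := by
    rw [← AddCircle.coe_nsmul, AddCircle.denseRange_zsmul_coe_iff, nsmul_eq_mul, mul_div_assoc]
    exact ha.natCast_mul (isOfFinOrder_of_finite ψ).orderOf_pos.ne'
  rintro ⟨x, t⟩
  refine dense_iff_inter_open.2 fun U hU ⟨⟨y, u⟩, hyu⟩ => ?_
  obtain ⟨V, W, -, hW, hyV, huW, hVW⟩ := isOpen_prod_iff.1 hU y u hyu
  obtain ⟨k, hk⟩ := hψ.exists_zpow_apply_eq x y
  obtain ⟨j, hj⟩ := ((Homeomorph.addRight (k • (a : AddCircle p) + t)).surjective.denseRange.comp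
    hdense (Homeomorph.continuous _)).exists_mem_open hW ⟨u, huW⟩
  have hψ_period : ψ ^ (k + j * N) = ψ ^ k := by rw [zpow_add, zpow_mul', hN, one_zpow, mul_one]
  refine ⟨_, hVW ?_, k + j * N, rfl⟩
  dsimp only
  rw [homeo_prodCongr_zpow_apply, hψ_period, hk, homeo_addLeft_zpow_apply]
  refine ⟨hyV, ?_⟩
  convert hj using 1
  simp only [Function.comp_apply, Homeomorph.coe_addRight]
  rw [add_zsmul, mul_zsmul, natCast_zsmul]
  abel

end FiniteCase

section Subshift

open SymbolicDynamics.FullShift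

def shiftHomeomorph (A : Type*) [TopologicalSpace A] : (ℤ → A) ≃ₜ (ℤ → A) where
  toFun := shift 1
  invFun := shift (-1)
  left_inv c := by rw [← shift_add, add_neg_cancel, shift_zero]
  right_inv c := by rw [← shift_add, neg_add_cancel, shift_zero]

variable {C X : Type*} [TopologicalSpace X]

def orbitLifts (q : C → X) (ψ : X ≃ₜ X) : Set (ℤ → C) :=
  {c | ∀ n, q (c (1 + n)) = ψ (q (c n))}

lemma isClosed_orbitLifts [TopologicalSpace C] [T2Space X] {q : C → X} (hq : Continuous q)
    (ψ : X ≃ₜ X) : IsClosed (orbitLifts q ψ) := by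
  rw [orbitLifts, ofPred_forall]
  exact isClosed_iInter fun n => isClosed_eq (hq.comp (continuous_apply _))
    (ψ.continuous.comp (hq.comp (continuous_apply n)))

lemma orbitLifts_nonempty {q : C → X} (hq : Surjective q) (ψ : X ≃ₜ X) [Nonempty X] :
    (orbitLifts q ψ).Nonempty := by
  obtain ⟨x⟩ := ‹Nonempty X›
  refine ⟨fun n => surjInv hq ((ψ ^ n) x), fun n => ?_⟩
  simp only [surjInv_eq hq, add_comm (1 : ℤ), homeo_zpow_add_one_apply]

lemma preimage_shiftHomeomorph_orbitLifts [TopologicalSpace C] (q : C → X) (ψ : X ≃ₜ X) :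
    shiftHomeomorph C ⁻¹' orbitLifts q ψ = orbitLifts q ψ := by
  ext c
  constructor
  · intro hc n
    have h := hc (-1 + n)
    change q (c (1 + (1 + (-1 + n)))) = ψ (q (c (1 + (-1 + n)))) at h
    rwa [add_neg_cancel_left] at h
  · intro hc n
    exact hc (1 + n)

end Subshift

theorem factor_of_minimal_cantor_system_of_infinite {X : Type*} [TopologicalSpace X]
    [Nonempty X] [Infinite X] [CompactSpace X] [TopologicalSpace.MetrizableSpace X]
    (ψ : X ≃ₜ X) (hmin : IsMinimalHomeo ψ) :
    ∃ (M : Type) (_ : TopologicalSpace M) (σ : M ≃ₜ M) (p : M → X),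
      IsCantorSpace M ∧ IsMinimalHomeo σ ∧ Continuous p ∧ Function.Surjective p ∧
        ∀ m, p (σ m) = ψ (p m) := by
  let := TopologicalSpace.metrizableSpaceMetric X
  obtain ⟨q, hqc, hqs⟩ := exists_nat_bool_continuous_surjective_of_compact X
  obtain ⟨M, hMinv, hMΩ, hMc, hMne, hσ⟩ := exists_isMinimalHomeo_restrict (shiftHomeomorph _)
    (isClosed_orbitLifts hqc ψ) (orbitLifts_nonempty hqs ψ)
    (preimage_shiftHomeomorph_orbitLifts q ψ)
  have : CompactSpace M := isCompact_iff_compactSpace.1 hMc.isCompact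
  have : Nonempty M := hMne.to_subtype
  let p : M → X := fun c => q (c.1 0)
  have hpc : Continuous p := hqc.comp ((continuous_apply 0).comp continuous_subtype_val)
  have hp : ∀ m, p ((shiftHomeomorph _).sets hMinv m) = ψ (p m) := fun m => hMΩ m.2 0
  have hps : Surjective p := hmin.surjective_of_semiconj hpc hp
  have : Infinite M := Infinite.of_surjective p hps
  have := hσ.perfectSpace
  let flatten : (ℤ → ℕ → Bool) ≃ₜ (ℕ → Bool) :=
    (Homeomorph.piCongrLeft Equiv.intEquivNat).trans cantorSpaceHomeomorphNatToCantorSpace.symm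
  have hM : IsCantorSpace M :=
    isCantorSpace_of_isEmbedding (flatten.isEmbedding.comp IsEmbedding.subtypeVal)
  exact ⟨M, _, _, p, hM, hσ, hpc, hps, hp⟩

/-- Every minimal homeomorphism of a nonempty compact metrizable space is a
factor of a minimal Cantor system. -/
theorem factor_of_minimal_cantor_system {X : Type*} [TopologicalSpace X] [Nonempty X]
    [CompactSpace X] [TopologicalSpace.MetrizableSpace X]
    (ψ : X ≃ₜ X) (hmin : IsMinimalHomeo ψ) :
    ∃ (M : Type) (_ : TopologicalSpace M) (σ : M ≃ₜ M) (p : M → X),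
      IsCantorSpace M ∧ IsMinimalHomeo σ ∧ Continuous p ∧ Function.Surjective p ∧
        ∀ m, p (σ m) = ψ (p m) := by
  rcases finite_or_infinite X with hX | hX
  · have hΦ := hmin.prodCongr_addLeft (p := 1) (a := √2) (by simpa using irrational_sqrt_two)
    obtain ⟨M, _, σ, p, hM, hσ, hpc, hps, hp⟩ := factor_of_minimal_cantor_system_of_infinite _ hΦ
    exact ⟨M, _, σ, Prod.fst ∘ p, hM, hσ, continuous_fst.comp hpc, Prod.fst_surjective.comp hps,
      fun m => congrArg Prod.fst (hp m)⟩
  · exact factor_of_minimal_cantor_system_of_infinite ψ hmin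
end

section
/- Let (X,φ) be a minimal Cantor system. If (X,φ) is not an odometer, then there exists a continuous map π : X → {0,1}^ℤ with π ∘ φ = σ ∘ π, where σ is the shift σ(y)(n) = y(n+1) on {0,1}^ℤ, such that the image π(X) is infinite. -/
/-- We endow each `ZMod n` with the discrete topology. -/
instance zmodTopology (n : ℕ) : TopologicalSpace (ZMod n) := ⊥

/-- The underlying space of the odometer of type `a`: coherent sequences in `∏ ℤ/a_nℤ`. -/
def OdometerSystem (a : ℕ → ℕ) : Type :=
  {z : (n : ℕ) → ZMod (a n) // ∀ n, (ZMod.cast (z (n + 1)) : ZMod (a n)) = z n}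

instance (a : ℕ → ℕ) : TopologicalSpace (OdometerSystem a) :=
  inferInstanceAs (TopologicalSpace
    {z : (n : ℕ) → ZMod (a n) // ∀ n, (ZMod.cast (z (n + 1)) : ZMod (a n)) = z n})

/-- A Cantor system is an *odometer* if it is conjugate to the `+1` map on the odometer of
some type `a`, where `a n ≥ 2`, `a n ∣ a (n+1)` and `a n < a (n+1)` for all `n`. -/
def IsOdometer {X : Type*} [TopologicalSpace X] (φ : X ≃ₜ X) : Prop :=
  ∃ a : ℕ → ℕ, (∀ n, 2 ≤ a n) ∧ (∀ n, a n ∣ a (n + 1)) ∧ (∀ n, a n < a (n + 1)) ∧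
    ∃ h : X ≃ₜ OdometerSystem a, ∀ (x : X) (n : ℕ), (h (φ x)).val n = (h x).val n + 1

/-!
If every continuous shift-equivariant map `X → {0,1}^ℤ` has finite image, then for each `k` the
itinerary of the first `k` coordinates of a point takes finitely many values, which a minimal `φ`
permutes in a single cycle. This gives continuous factor maps `c k : X → ZMod (p k)` onto
rotations, whose fibres refine as `k` grows and eventually separate points. Since `X` is infinite
the periods `p k` are unbounded, and along a subsequence of strictly increasing periods the maps
`c k` assemble into a conjugacy with an odometer.
-/

open Function Set Filter

instance (n : ℕ) : DiscreteTopology (ZMod n) := ⟨rfl⟩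

instance (a : ℕ → ℕ) : T2Space (OdometerSystem a) :=
  inferInstanceAs (T2Space
    {z : (n : ℕ) → ZMod (a n) // ∀ n, (ZMod.cast (z (n + 1)) : ZMod (a n)) = z n})

section Itinerary

variable {X : Type*} [TopologicalSpace X] (φ : X ≃ₜ X)

theorem Homeomorph.apply_zpow_of_semiconj {β : Type*} {τ : Equiv.Perm β} {f : X → β}
    (h : ∀ x, f (φ x) = τ (f x)) (n : ℤ) (x : X) : f ((φ ^ n) x) = (τ ^ n) (f x) := by
  induction n using Int.induction_on generalizing x with
  | zero => rfl
  | succ n ih => rw [zpow_add_one, zpow_add_one, homeo_mul_apply, ih, h, Equiv.Perm.mul_apply]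
  | pred n ih =>
    have hinv : f (φ⁻¹ x) = τ⁻¹ (f x) := by
      rw [eq_comm, Equiv.Perm.inv_eq_iff_eq, ← h, ← homeo_mul_apply, mul_inv_cancel,
        homeo_one_apply]
    rw [zpow_sub_one, zpow_sub_one, homeo_mul_apply, ih, hinv, Equiv.Perm.mul_apply]

def itinerary {α : Type*} (b : X → α) (x : X) : ℤ → α := fun n => b ((φ ^ n) x)

def shiftPerm (α : Type*) : Equiv.Perm (ℤ → α) where
  toFun v n := v (n + 1)
  invFun v n := v (n - 1)
  left_inv v := by simp
  right_inv v := by simp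

variable {φ} {α : Type*}

theorem itinerary_apply_homeo (b : X → α) (x : X) (n : ℤ) :
    itinerary φ b (φ x) n = itinerary φ b x (n + 1) := by
  rw [itinerary, itinerary, homeo_zpow_add_apply, zpow_one]

theorem itinerary_apply_homeo_eq_shiftPerm (b : X → α) (x : X) :
    itinerary φ b (φ x) = shiftPerm α (itinerary φ b x) :=
  funext (itinerary_apply_homeo b x)

theorem continuous_itinerary [TopologicalSpace α] {b : X → α} (hb : Continuous b) :
    Continuous (itinerary φ b) :=
  continuous_pi fun n => hb.comp (φ ^ n).continuous

theorem finite_range_itinerary_pi {ι : Type*} [Finite ι] {b : X → ι → α}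
    (h : ∀ i, (range (itinerary φ fun x => b x i)).Finite) : (range (itinerary φ b)).Finite := by
  refine ((Set.Finite.pi h).image swap).subset ?_
  rintro _ ⟨x, rfl⟩
  exact ⟨fun i => itinerary φ (fun x => b x i) x, fun i _ => ⟨x, rfl⟩, rfl⟩

end Itinerary

section CyclicFactor

variable {X : Type*} [TopologicalSpace X]

structure IsCyclicFactor (φ : X ≃ₜ X) (x₀ : X) {p : ℕ} (c : X → ZMod p) : Prop where
  continuous : Continuous c
  map_apply : ∀ x, c (φ x) = c x + 1
  map_base : c x₀ = 0

namespace IsCyclicFactor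

variable {φ : X ≃ₜ X} {x₀ : X} {p q : ℕ} {c : X → ZMod p} {d : X → ZMod q}

theorem apply_zpow (hc : IsCyclicFactor φ x₀ c) (n : ℤ) : c ((φ ^ n) x₀) = n := by
  simpa [hc.map_base] using φ.apply_zpow_of_semiconj (τ := Equiv.addRight 1) hc.map_apply n x₀

theorem surjective (hc : IsCyclicFactor φ x₀ c) : Surjective c := fun j => by
  obtain ⟨n, rfl⟩ := ZMod.intCast_surjective j
  exact ⟨_, hc.apply_zpow n⟩

theorem neZero [CompactSpace X] (hc : IsCyclicFactor φ x₀ c) : NeZero p := by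
  have : Finite (ZMod p) := by
    rw [← Set.finite_univ_iff, ← hc.surjective.range_eq]
    exact (isCompact_range hc.continuous).finite_of_discrete
  refine ⟨fun hp => ?_⟩
  subst hp
  exact not_finite (ZMod 0)

theorem dvd_of_factorsThrough (hc : IsCyclicFactor φ x₀ c) (hd : IsCyclicFactor φ x₀ d)
    (h : FactorsThrough d c) : q ∣ p := by
  have hp : d ((φ ^ (p : ℤ)) x₀) = d x₀ :=
    h (by rw [hc.apply_zpow, hc.map_base, Int.cast_natCast, ZMod.natCast_self])
  rw [hd.apply_zpow, hd.map_base, ZMod.intCast_zmod_eq_zero_iff_dvd] at hp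
  exact_mod_cast hp

theorem cast_apply (hdense : Dense (range fun n : ℤ => (φ ^ n) x₀))
    (hc : IsCyclicFactor φ x₀ c) (hd : IsCyclicFactor φ x₀ d) (hqp : q ∣ p) (x : X) :
    (ZMod.cast (c x) : ZMod q) = d x := by
  refine congrFun (Continuous.ext_on hdense (continuous_of_discreteTopology.comp hc.continuous)
    hd.continuous ?_) x
  rintro _ ⟨n, rfl⟩
  change (ZMod.cast (c _) : ZMod q) = d _
  rw [hc.apply_zpow, hd.apply_zpow, ZMod.cast_intCast hqp]

end IsCyclicFactor

end CyclicFactor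

section CyclicFactorOfFiniteRange

variable {X : Type*} [TopologicalSpace X] {F : Type*} [TopologicalSpace F] [T1Space F]

theorem exists_isCyclicFactor_ker_eq {φ : X ≃ₜ X} {x₀ : X}
    (hdense : Dense (range fun n : ℤ => (φ ^ n) x₀)) (s : Equiv.Perm F) {f : X → F}
    (hf : Continuous f) (hfin : (range f).Finite) (hs : ∀ x, f (φ x) = s (f x)) :
    ∃ (p : ℕ) (c : X → ZMod p), IsCyclicFactor φ x₀ c ∧ ∀ x y, c x = c y ↔ f x = f y := by
  let g := fun j => ((MulAction.orbitZPowersEquiv s (f x₀)).symm j : F)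
  have hg_int (n : ℤ) : g n = (s ^ n) (f x₀) :=
    congrArg Subtype.val (MulAction.orbitZPowersEquiv_symm_apply' s (f x₀) n)
  have hg_inj : Injective g := Subtype.val_injective.comp (Equiv.injective _)
  have hg_succ (j) : g (j + 1) = s (g j) := by
    obtain ⟨n, rfl⟩ := ZMod.intCast_surjective j
    rw [← Int.cast_one, ← Int.cast_add, add_comm, hg_int, hg_int, zpow_add, zpow_one,
      Equiv.Perm.mul_apply]
  have hf_orbit (n : ℤ) : f ((φ ^ n) x₀) = g n :=
    (φ.apply_zpow_of_semiconj hs n x₀).trans (hg_int n).symm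
  -- `range g` is finite, hence closed, and contains `f` of a dense orbit.
  have hf_range : ∀ x, f x ∈ range g := by
    have hg_range : range g ⊆ range f := by
      rintro _ ⟨j, rfl⟩
      obtain ⟨n, rfl⟩ := ZMod.intCast_surjective j
      exact ⟨_, hf_orbit n⟩
    have hclosed : IsClosed (f ⁻¹' range g) := (hfin.subset hg_range).isClosed.preimage hf
    refine fun x => hclosed.closure_subset_iff.2 ?_ (hdense x)
    rintro _ ⟨n, rfl⟩
    exact ⟨n, (hf_orbit n).symm⟩
  choose c hc using hf_range
  have hf_lc : IsLocallyConstant f := by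
    have : Finite (range f) := hfin.to_subtype
    exact ((IsLocallyConstant.iff_continuous _).2 hf.rangeFactorization).comp Subtype.val
  refine ⟨_, c, ⟨?_, fun x => hg_inj ?_, hg_inj ?_⟩, fun x y => ?_⟩
  · exact (IsLocallyConstant.desc c g (by rwa [show g ∘ c = f from funext hc]) hg_inj).continuous
  · rw [hc, hs, hg_succ, hc]
  · simpa [hc] using (hg_int 0).symm
  · rw [← hc x, ← hc y, hg_inj.eq_iff]

end CyclicFactorOfFiniteRange

theorem exists_injective_comp_of_separating {X ι : Type*} [Finite ι] {Y : ℕ → Type*}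
    {c : ∀ k, X → Y k} (hrefine : ∀ k l, k ≤ l → FactorsThrough (c k) (c l))
    (hsep : ∀ x y, (∀ k, c k x = c k y) → x = y) {v : ι → X} (hv : Injective v) :
    ∃ K, Injective (c K ∘ v) := by
  have h : ∀ i j, ∀ᶠ K in atTop, c K (v i) = c K (v j) → i = j := by
    intro i j
    by_cases hij : i = j
    · exact Eventually.of_forall fun _ _ => hij
    obtain ⟨k, hk⟩ : ∃ k, c k (v i) ≠ c k (v j) := by
      by_contra! h
      exact hij (hv (hsep _ _ h))
    exact eventually_atTop.2 ⟨k, fun l hkl h => absurd (hrefine k l hkl h) hk⟩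
  obtain ⟨K, hK⟩ := (eventually_all.2 fun i => eventually_all.2 (h i)).exists
  exact ⟨K, fun i j => hK i j⟩

section Odometer

variable {X : Type*} [TopologicalSpace X] [CompactSpace X]

theorem OdometerSystem.exists_forall_eq_val {a : ℕ → ℕ} {c : ∀ n, X → ZMod (a n)}
    (hc : ∀ n, Continuous (c n)) (hsurj : ∀ n, Surjective (c n))
    (hcoh : ∀ n x, (ZMod.cast (c (n + 1) x) : ZMod (a n)) = c n x) (z : OdometerSystem a) :
    ∃ x, ∀ n, c n x = z.val n := by
  let K n := {x | c n x = z.val n}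
  have hK_anti (n : ℕ) : K (n + 1) ⊆ K n := fun x (hx : c (n + 1) x = z.val (n + 1)) =>
    show c n x = z.val n by rw [← hcoh, hx, z.property]
  have hK_closed (n : ℕ) : IsClosed (K n) := isClosed_eq (hc n) continuous_const
  obtain ⟨x, hx⟩ := IsCompact.nonempty_iInter_of_sequence_nonempty_isCompact_isClosed K hK_anti
    (fun n => hsurj n (z.val n)) (hK_closed 0).isCompact hK_closed
  exact ⟨x, mem_iInter.1 hx⟩

variable {φ : X ≃ₜ X} {x₀ : X}

theorem isOdometer_of_isCyclicFactor (hdense : Dense (range fun n : ℤ => (φ ^ n) x₀))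
    {a : ℕ → ℕ} (ha : ∀ n, 2 ≤ a n) (hdvd : ∀ n, a n ∣ a (n + 1)) (hlt : ∀ n, a n < a (n + 1))
    {c : ∀ n, X → ZMod (a n)} (hc : ∀ n, IsCyclicFactor φ x₀ (c n))
    (hsep : ∀ x y, (∀ n, c n x = c n y) → x = y) : IsOdometer φ := by
  have hcoh (n : ℕ) := (hc (n + 1)).cast_apply hdense (hc n) (hdvd n)
  let H : X → OdometerSystem a := fun x => ⟨fun n => c n x, fun n => hcoh n x⟩
  have hH : Continuous H := (continuous_pi fun n => (hc n).continuous).subtype_mk _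
  have hH_bij : Bijective H := by
    refine ⟨fun x y hxy => hsep x y fun n => congrFun (congrArg Subtype.val hxy) n, fun z => ?_⟩
    obtain ⟨x, hx⟩ := OdometerSystem.exists_forall_eq_val (fun n => (hc n).continuous)
      (fun n => (hc n).surjective) hcoh z
    exact ⟨x, Subtype.ext (funext hx)⟩
  exact ⟨a, ha, hdvd, hlt, Continuous.homeoOfEquivCompactToT2 (f := .ofBijective H hH_bij) hH,
    fun x n => (hc n).map_apply x⟩

theorem isOdometer_of_isCyclicFactor_refining [Infinite X]
    (hdense : Dense (range fun n : ℤ => (φ ^ n) x₀))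
    {p : ℕ → ℕ} {c : ∀ k, X → ZMod (p k)} (hc : ∀ k, IsCyclicFactor φ x₀ (c k))
    (hrefine : ∀ k l, k ≤ l → FactorsThrough (c k) (c l))
    (hsep : ∀ x y, (∀ k, c k x = c k y) → x = y) : IsOdometer φ := by
  have (k : ℕ) : NeZero (p k) := (hc k).neZero
  have hmono : Monotone p := monotone_nat_of_le_succ fun k => Nat.le_of_dvd (NeZero.pos _)
    ((hc (k + 1)).dvd_of_factorsThrough (hc k) (hrefine k (k + 1) k.le_succ))
  have hunbdd (N : ℕ) : ∃ k, N ≤ p k := by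
    obtain ⟨K, hK⟩ := exists_injective_comp_of_separating hrefine hsep
      ((Infinite.natEmbedding X).injective.comp (Fin.val_injective (n := N)))
    exact ⟨K, by simpa using Fintype.card_le_of_injective _ hK⟩
  obtain ⟨idx, hidx, hp_idx⟩ :=
    strictMono_subseq_of_tendsto_atTop (tendsto_atTop_atTop_of_monotone hmono hunbdd)
  -- `p ∘ idx` is strictly increasing, so from index `2` on its values are at least `2`.
  refine isOdometer_of_isCyclicFactor hdense (a := fun n => p (idx (n + 2)))
    (fun n => (by omega : 2 ≤ n + 2).trans (hp_idx.id_le (n + 2)))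
    (fun n => (hc _).dvd_of_factorsThrough (hc _) (hrefine _ _ (hidx.monotone (by omega))))
    (fun n => hp_idx (by omega)) (c := fun n => c (idx (n + 2))) (fun n => hc _)
    (fun x y h => hsep x y fun k => ?_)
  exact hrefine k (idx (k + 2)) ((by omega : k ≤ k + 2).trans (hidx.id_le _)) (h k)

end Odometer

/-- A minimal Cantor system which is not an odometer admits a continuous
equivariant map to the full 2-shift with infinite image. -/
theorem exists_shift_factor_with_infinite_image {X : Type*} [TopologicalSpace X]
    (hX : IsCantorSpace X) (φ : X ≃ₜ X) (hmin : IsMinimalHomeo φ)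
    (hodo : ¬ IsOdometer φ) :
    ∃ π : X → (ℤ → Bool), Continuous π ∧ (∀ (x : X) (n : ℤ), π (φ x) n = π x (n + 1)) ∧
      (Set.range π).Infinite := by
  by_contra! hfin
  obtain ⟨e⟩ := hX
  have : CompactSpace X := e.symm.compactSpace
  have : Infinite X := Infinite.of_injective e.symm e.symm.injective
  obtain ⟨x₀⟩ : Nonempty X := inferInstance
  let b (k : ℕ) (x : X) (i : Fin k) : Bool := e x i
  have hb (k : ℕ) (i : Fin k) : Continuous fun x => b k x i :=
    (continuous_apply _).comp e.continuous
  choose p c hc hker using fun k => exists_isCyclicFactor_ker_eq (hmin x₀) (shiftPerm _)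
    (continuous_itinerary (continuous_pi (hb k)))
    (finite_range_itinerary_pi fun i => hfin _ (continuous_itinerary (hb k i))
      (itinerary_apply_homeo _))
    (itinerary_apply_homeo_eq_shiftPerm (b k))
  refine hodo (isOdometer_of_isCyclicFactor_refining (hmin x₀) hc (fun k l hkl x y hxy => ?_)
    fun x y hxy => ?_)
  · rw [hker] at hxy ⊢
    exact funext fun n => funext fun i => congrFun (congrFun hxy n) (Fin.castLE hkl i)
  · refine e.injective (funext fun i => ?_)
    have hagree := (hker (i + 1) x y).1 (hxy (i + 1))
    simpa [itinerary, b] using congrFun (congrFun hagree 0) (Fin.last i)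
end

section
/- Let (X,φ) be a minimal Cantor system. Then for every integer n ≥ 1 there is an injective group homomorphism from the permutational wreath product ℤ ≀_n S_n := ℤ^n ⋊ S_n, where the symmetric group S_n acts on ℤ^n by permuting coordinates, into the topological full group 𝔗(φ). -/
/-- The topological full group of a homeomorphism `φ`: all homeomorphisms `γ` admitting a
continuous orbit cocycle `f : X → ℤ` with `γ x = φ ^ (f x) x` for all `x`. -/
def topFullGroup {X : Type*} [TopologicalSpace X] (φ : X ≃ₜ X) : Subgroup (X ≃ₜ X) where
  carrier := {γ | ∃ f : X → ℤ, Continuous f ∧ ∀ x, γ x = (φ ^ f x) x}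
  one_mem' := ⟨fun _ => 0, continuous_const, fun x => by simp⟩
  mul_mem' := by
    rintro γ₁ γ₂ ⟨f₁, hf₁, h₁⟩ ⟨f₂, hf₂, h₂⟩
    refine ⟨fun x => f₁ (γ₂ x) + f₂ x, (hf₁.comp γ₂.continuous).add hf₂, fun x => ?_⟩
    rw [homeo_mul_apply, homeo_zpow_add_apply, ← h₂ x, ← h₁ (γ₂ x)]
  inv_mem' := by
    rintro γ ⟨f, hf, h⟩
    refine ⟨fun x => -(f (γ⁻¹ x)), (hf.comp (γ⁻¹ : X ≃ₜ X).continuous).neg, fun x => ?_⟩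
    have h1 : γ (γ⁻¹ x) = (φ ^ f (γ⁻¹ x)) (γ⁻¹ x) := h (γ⁻¹ x)
    have h2 : γ (γ⁻¹ x) = x := γ.apply_symm_apply x
    have h3 := h1.symm.trans h2
    calc γ⁻¹ x = (φ ^ (-(f (γ⁻¹ x)) + f (γ⁻¹ x))) (γ⁻¹ x) := by simp
    _ = (φ ^ (-(f (γ⁻¹ x)))) ((φ ^ (f (γ⁻¹ x))) (γ⁻¹ x)) := homeo_zpow_add_apply ..
    _ = (φ ^ (-(f (γ⁻¹ x)))) x := by rw [h3]

/-- The permutation action of `S_n` on `ℤ^n` by permuting coordinates, as multiplicative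
automorphisms. -/
def permCongr (n : ℕ) (σ : Equiv.Perm (Fin n)) :
    (Fin n → Multiplicative ℤ) ≃* (Fin n → Multiplicative ℤ) :=
  { Equiv.piCongrLeft' (fun _ => Multiplicative ℤ) σ with
    map_mul' := fun _ _ => rfl }

def permOnZn (n : ℕ) : Equiv.Perm (Fin n) →* MulAut (Fin n → Multiplicative ℤ) :=
  MonoidHom.mk' (fun σ => permCongr n σ) (by
    intro σ τ
    apply MulEquiv.ext
    intro f
    rfl)

open Function Set

section HomeomorphGroup

variable {X : Type*} [TopologicalSpace X]

lemma continuous_zpow_apply {φ : X ≃ₜ X} {c : X → ℤ} (hc : Continuous c) :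
    Continuous fun y => (φ ^ c y) y := by
  have : Continuous fun p : ℤ × X => (φ ^ p.1) p.2 :=
    continuous_prod_of_discrete_left.2 fun m => (φ ^ m).continuous
  exact this.comp (hc.prodMk continuous_id)

lemma self_mem_topFullGroup (φ : X ≃ₜ X) : φ ∈ topFullGroup φ :=
  ⟨fun _ => 1, continuous_const, fun _ => by rw [zpow_one]⟩

def supportedIn (S : Set X) : Subgroup (X ≃ₜ X) where
  carrier := {g | ∀ y ∉ S, g y = y}
  one_mem' _ _ := rfl
  mul_mem' {g h} hg hh y hy := by rw [homeo_mul_apply, hh y hy, hg y hy]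
  inv_mem' {g} hg y hy := g.symm_apply_eq.2 (hg y hy).symm

variable {g h t : X ≃ₜ X} {S T : Set X}

lemma supportedIn_mono (hST : S ⊆ T) : supportedIn S ≤ supportedIn T :=
  fun _ hg y hy => hg y fun hyS => hy (hST hyS)

lemma apply_mem_of_mem_supportedIn (hg : g ∈ supportedIn S) {y : X} (hy : y ∈ S) :
    g y ∈ S := by
  by_contra hgy
  exact hgy (by rwa [g.injective (hg _ hgy)])

lemma commute_of_mem_supportedIn (hg : g ∈ supportedIn S) (hh : h ∈ supportedIn T)
    (hST : Disjoint S T) : Commute g h :=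
  Homeomorph.toEquiv_injective <| Equiv.Perm.Disjoint.commute fun y => by
    by_cases hy : y ∈ S
    · exact .inr (hh y (disjoint_left.1 hST hy))
    · exact .inl (hg y hy)

lemma mul_mul_inv_mem_supportedIn (hg : g ∈ supportedIn S) (k : X ≃ₜ X) :
    k * g * k⁻¹ ∈ supportedIn (⇑k⁻¹ ⁻¹' S) := fun y hy => by
  rw [homeo_mul_apply, homeo_mul_apply, hg _ hy]
  exact k.apply_symm_apply y

lemma conj_eq_conj_of_eqOn (ht : t ∈ supportedIn S) (hgh : EqOn g h S) :
    g * t * g⁻¹ = h * t * h⁻¹ := by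
  have hk : h⁻¹ * g ∈ supportedIn Sᶜ := fun y hy => by
    rw [homeo_mul_apply, hgh (not_not.1 hy)]
    exact h.symm_apply_apply y
  have hcomm := commute_of_mem_supportedIn hk ht disjoint_compl_left
  calc g * t * g⁻¹ = h * ((h⁻¹ * g) * t * (h⁻¹ * g)⁻¹) * h⁻¹ := by group
    _ = h * t * h⁻¹ := by rw [hcomm.eq, mul_inv_cancel_right]

end HomeomorphGroup

section Levels

variable {X : Type*} [TopologicalSpace X] {φ : X ≃ₜ X} {A : Set X}

def level (φ : X ≃ₜ X) (A : Set X) (k : ℤ) : Set X := (φ ^ (-k)) ⁻¹' A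

lemma level_eq_preimage_inv (φ : X ≃ₜ X) (A : Set X) (k : ℤ) :
    level φ A k = ⇑(φ ^ k)⁻¹ ⁻¹' A := by
  rw [level, zpow_neg]

lemma isClopen_level (hA : IsClopen A) (k : ℤ) : IsClopen (level φ A k) :=
  hA.preimage (φ ^ (-k)).continuous

lemma zpow_apply_mem_level {y : X} {k : ℤ} (hy : y ∈ level φ A k) (m : ℤ) :
    (φ ^ m) y ∈ level φ A (m + k) := by
  rwa [level, mem_preimage, ← homeo_zpow_add_apply, show -(m + k) + m = -k by ring]

lemma zpow_apply_mem_level_of_mem {a : X} (ha : a ∈ A) (k : ℤ) :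
    (φ ^ k) a ∈ level φ A k := by
  simpa using zpow_apply_mem_level (k := 0) (by simpa [level] using ha) k

lemma disjoint_level_of_disjoint_preimage {i j : ℤ} (h : Disjoint A ((φ ^ (j - i)) ⁻¹' A)) :
    Disjoint (level φ A i) (level φ A j) := by
  refine disjoint_left.2 fun y hi hj => disjoint_left.1 h hj ?_
  change (φ ^ (j - i)) ((φ ^ (-j)) y) ∈ A
  rwa [← homeo_zpow_add_apply, show j - i + -j = -i by ring]

end Levels

def ReturnsTo {X : Type*} [TopologicalSpace X] (φ : X ≃ₜ X) (A : Set X) : Prop :=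
  ∀ y, ∃ k : ℕ, (φ ^ ((k : ℤ) + 1)) y ∈ A

namespace IsMinimalHomeo

variable {X : Type*} [TopologicalSpace X] {φ : X ≃ₜ X}

lemma inv (hφ : IsMinimalHomeo φ) : IsMinimalHomeo φ⁻¹ := fun x => by
  have : (range fun n : ℤ => (φ⁻¹ ^ n) x) = range fun n : ℤ => (φ ^ n) x := by
    simp only [inv_zpow']
    exact (Equiv.neg ℤ).surjective.range_comp fun n => (φ ^ n) x
  rw [this]
  exact hφ x

lemma zpow_apply_ne [T1Space X] [Infinite X] (hφ : IsMinimalHomeo φ) {s : ℤ} (hs : s ≠ 0)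
    (x : X) : (φ ^ s) x ≠ x := by
  intro hfix
  have hper : Periodic (fun n : ℤ => (φ ^ n) x) |s| := by
    have hs : Periodic (fun n : ℤ => (φ ^ n) x) s := fun n => by
      change (φ ^ (n + s)) x = (φ ^ n) x
      rw [homeo_zpow_add_apply, hfix]
    rcases abs_choice s with h | h <;> rw [h]
    exacts [hs, hs.neg]
  have hfin : (range fun n : ℤ => (φ ^ n) x).Finite := by
    refine ((finite_Ico 0 |s|).image fun n : ℤ => (φ ^ n) x).subset ?_
    rintro - ⟨n, rfl⟩
    obtain ⟨m, hm, hnm⟩ := hper.exists_mem_Ico₀ (abs_pos.2 hs) n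
    exact ⟨m, hm, hnm.symm⟩
  apply infinite_univ (α := X)
  rwa [← (hφ x).closure_eq, hfin.isClosed.closure_eq]

lemma returnsTo [CompactSpace X] (hφ : IsMinimalHomeo φ) {U : Set X} (hU : IsOpen U)
    (hne : U.Nonempty) : ReturnsTo φ U := fun y => by
  obtain ⟨t, ht⟩ := isCompact_univ.elim_finite_subcover (fun m : ℤ => (φ ^ m) ⁻¹' U)
    (fun m => hU.preimage (φ ^ m).continuous) fun z _ => by
      obtain ⟨-, ⟨m, rfl⟩, hm⟩ := (hφ z).exists_mem_open hU hne
      exact mem_iUnion.2 ⟨m, hm⟩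
  set M := t.sup Int.natAbs
  obtain ⟨m, hmt, hm⟩ := mem_iUnion₂.1 (ht (mem_univ ((φ ^ ((M : ℤ) + 1)) y)))
  have : m.natAbs ≤ M := Finset.le_sup (f := Int.natAbs) hmt
  refine ⟨(m + M).toNat, ?_⟩
  rwa [Int.toNat_of_nonneg (by omega), add_assoc, homeo_zpow_add_apply]

end IsMinimalHomeo

section WanderingClopen

variable {X : Type*} [TopologicalSpace X] [TotallySeparatedSpace X]

lemma exists_isClopen_disjoint_preimage {g : X → X} (hg : Continuous g) {x : X}
    (hx : g x ≠ x) : ∃ U : Set X, IsClopen U ∧ x ∈ U ∧ Disjoint U (g ⁻¹' U) := by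
  obtain ⟨C, hC, hxC, hgxC⟩ := exists_isClopen_of_totally_separated hx.symm
  refine ⟨C ∩ g ⁻¹' Cᶜ, hC.inter (hC.compl.preimage hg), ⟨hxC, hgxC⟩, ?_⟩
  exact disjoint_left.2 fun y hy hy' => hy.2 hy'.1

lemma exists_isClopen_pairwise_disjoint_level {φ : X ≃ₜ X} {x : X}
    (hper : ∀ s : ℤ, s ≠ 0 → (φ ^ s) x ≠ x) (n : ℕ) :
    ∃ A : Set X, IsClopen A ∧ x ∈ A ∧ Pairwise (Disjoint on fun i : Fin n => level φ A i) := by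
  have hU : ∀ s : ℤ, ∃ U : Set X, IsClopen U ∧ x ∈ U ∧
      (s ≠ 0 → Disjoint U ((φ ^ s) ⁻¹' U)) := by
    intro s
    by_cases hs : s = 0
    · exact ⟨univ, isClopen_univ, mem_univ x, fun h => absurd hs h⟩
    · obtain ⟨U, hU, hxU, hdisj⟩ :=
        exists_isClopen_disjoint_preimage (φ ^ s).continuous (hper s hs)
      exact ⟨U, hU, hxU, fun _ => hdisj⟩
  choose U hUc hxU hUdisj using hU
  set A := ⋂ s ∈ Finset.Ioo 0 (n : ℤ), U s
  refine ⟨A, isClopen_biInter_finset fun s _ => hUc s, mem_iInter₂.2 fun s _ => hxU s,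
    (pairwise_disjoint_on _).2 fun i j hij => ?_⟩
  have hd : (j : ℤ) - i ∈ Finset.Ioo 0 (n : ℤ) := by
    simp only [Finset.mem_Ioo]
    omega
  have hAU : A ⊆ U (j - i) := biInter_subset_of_mem hd
  exact disjoint_level_of_disjoint_preimage ((hUdisj _ (by omega)).mono hAU (preimage_mono hAU))

end WanderingClopen

section ReturnMap

open scoped Classical

variable {X : Type*} [TopologicalSpace X]

lemma isLocallyConstant_nat_find {P : ℕ → Set X} (hP : ∀ k, IsClopen (P k))
    (h : ∀ y, ∃ k, y ∈ P k) : IsLocallyConstant fun y => Nat.find (h y) := by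
  refine IsLocallyConstant.iff_isOpen_fiber.2 fun k => ?_
  have : (fun y => Nat.find (h y)) ⁻¹' {k} = P k ∩ ⋂ j ∈ Finset.range k, (P j)ᶜ := by
    ext y
    simp [Nat.find_eq_iff]
  rw [this]
  exact (hP k).isOpen.inter (isOpen_biInter_finset fun j _ => (hP j).compl.isOpen)

variable {φ ψ : X ≃ₜ X} {A : Set X}

variable (φ) in
noncomputable def returnTime (h : ReturnsTo φ A) (y : X) : ℤ := Nat.find (h y) + 1

lemma zpow_returnTime_apply_mem (h : ReturnsTo φ A) (y : X) : (φ ^ returnTime φ h y) y ∈ A :=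
  Nat.find_spec (h y)

lemma continuous_returnTime (hA : IsClopen A) (h : ReturnsTo φ A) :
    Continuous (returnTime φ h) :=
  ((isLocallyConstant_nat_find (P := fun k : ℕ => (φ ^ ((k : ℤ) + 1)) ⁻¹' A)
    (fun _ => hA.preimage (φ ^ _).continuous) h).comp fun k : ℕ => (k : ℤ) + 1).continuous

variable (φ) in
noncomputable def returnFun (h : ReturnsTo φ A) (y : X) : X :=
  (φ ^ A.indicator (returnTime φ h) y) y

lemma returnFun_of_mem (h : ReturnsTo φ A) {y : X} (hy : y ∈ A) :
    returnFun φ h y = (φ ^ returnTime φ h y) y := by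
  rw [returnFun, indicator_of_mem hy]

lemma returnFun_of_notMem (h : ReturnsTo φ A) {y : X} (hy : y ∉ A) : returnFun φ h y = y := by
  rw [returnFun, indicator_of_notMem hy, zpow_zero, homeo_one_apply]

lemma returnTime_inv_returnFun (h : ReturnsTo φ A) (h' : ReturnsTo φ⁻¹ A) {y : X}
    (hy : y ∈ A) : returnTime φ⁻¹ h' (returnFun φ h y) = returnTime φ h y := by
  have hback : ∀ j : ℤ,
      (φ⁻¹ ^ (j + 1)) (returnFun φ h y) = (φ ^ (returnTime φ h y - (j + 1))) y := by
    intro j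
    rw [returnFun_of_mem h hy, inv_zpow', ← homeo_zpow_add_apply, neg_add_eq_sub]
  have hfind : Nat.find (h' (returnFun φ h y)) = Nat.find (h y) := by
    refine (Nat.find_eq_iff _).2 ⟨by rwa [hback, returnTime, sub_self, zpow_zero], fun j hj => ?_⟩
    rw [hback, returnTime, show (Nat.find (h y) : ℤ) + 1 - ((j : ℤ) + 1) =
      ((Nat.find (h y) - j - 1 : ℕ) : ℤ) + 1 by omega]
    exact Nat.find_min (h y) (by omega)
  rw [returnTime, returnTime, hfind]

lemma returnFun_returnFun (h : ReturnsTo φ A) (h' : ReturnsTo ψ A) (hψ : ψ * φ = 1) (y : X) :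
    returnFun ψ h' (returnFun φ h y) = y := by
  obtain rfl := eq_inv_of_mul_eq_one_left hψ
  by_cases hy : y ∈ A
  · rw [returnFun_of_mem h' (returnFun_of_mem h hy ▸ zpow_returnTime_apply_mem h y),
      returnTime_inv_returnFun h h' hy, returnFun_of_mem h hy, inv_zpow', ← homeo_zpow_add_apply,
      neg_add_cancel, zpow_zero, homeo_one_apply]
  · rw [returnFun_of_notMem h hy, returnFun_of_notMem h' hy]

variable (φ) in
noncomputable def returnMap (hA : IsClopen A) (h : ReturnsTo φ A) (h' : ReturnsTo φ⁻¹ A) :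
    X ≃ₜ X where
  toFun := returnFun φ h
  invFun := returnFun φ⁻¹ h'
  left_inv := returnFun_returnFun h h' (inv_mul_cancel φ)
  right_inv := returnFun_returnFun h' h (mul_inv_cancel φ)
  continuous_toFun :=
    continuous_zpow_apply (hA.continuous_indicator (continuous_returnTime hA h))
  continuous_invFun :=
    continuous_zpow_apply (hA.continuous_indicator (continuous_returnTime hA h'))

variable {hA : IsClopen A} {h : ReturnsTo φ A} {h' : ReturnsTo φ⁻¹ A}

lemma returnMap_mem_topFullGroup : returnMap φ hA h h' ∈ topFullGroup φ :=
  ⟨_, hA.continuous_indicator (continuous_returnTime hA h), fun _ => rfl⟩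

lemma returnMap_mem_supportedIn : returnMap φ hA h h' ∈ supportedIn A :=
  fun _ hy => returnFun_of_notMem h hy

lemma returnMap_pow_apply {a : X} (ha : a ∈ A) (k : ℕ) :
    ∃ s : ℤ, k ≤ s ∧ (returnMap φ hA h h' ^ k) a = (φ ^ s) a := by
  induction k with
  | zero => exact ⟨0, le_rfl, rfl⟩
  | succ k ih =>
    obtain ⟨s, hks, hs⟩ := ih
    have hmem : (returnMap φ hA h h' ^ k) a ∈ A :=
      apply_mem_of_mem_supportedIn (pow_mem returnMap_mem_supportedIn k) ha
    refine ⟨returnTime φ h ((φ ^ s) a) + s, ?_, ?_⟩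
    · have : 0 ≤ (Nat.find (h ((φ ^ s) a)) : ℤ) := Nat.cast_nonneg _
      simp only [returnTime]
      omega
    · rw [pow_succ', homeo_mul_apply]
      change returnFun φ h _ = _
      rw [returnFun_of_mem h hmem, hs, homeo_zpow_add_apply]

lemma returnMap_zpow_apply_ne {a : X} (ha : a ∈ A) (hper : ∀ s : ℤ, s ≠ 0 → (φ ^ s) a ≠ a)
    {m : ℤ} (hm : m ≠ 0) : (returnMap φ hA h h' ^ m) a ≠ a := by
  have hpos : ∀ k : ℕ, 0 < k → (returnMap φ hA h h' ^ k) a ≠ a := fun k hk => by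
    obtain ⟨s, hks, hs⟩ := returnMap_pow_apply (hA := hA) (h := h) (h' := h') ha k
    rw [hs]
    exact hper s (by omega)
  rcases Int.natAbs_eq m with hm' | hm' <;> rw [hm']
  · exact zpow_natCast (returnMap φ hA h h') _ ▸ hpos _ (Int.natAbs_pos.2 hm)
  · rw [zpow_neg, zpow_natCast]
    exact fun hfix => hpos _ (Int.natAbs_pos.2 hm) ((Homeomorph.symm_apply_eq _).1 hfix).symm

end ReturnMap

structure ClopenTower {X : Type*} [TopologicalSpace X] (φ : X ≃ₜ X) (n : ℕ) where
  base : Set X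
  isClopen_base : IsClopen base
  returnsTo : ReturnsTo φ base
  returnsTo_inv : ReturnsTo φ⁻¹ base
  pairwise_disjoint_level : Pairwise (Disjoint on fun i : Fin n => level φ base i)

lemma IsMinimalHomeo.exists_clopenTower {X : Type*} [TopologicalSpace X] [CompactSpace X]
    [TotallySeparatedSpace X] {φ : X ≃ₜ X} (hφ : IsMinimalHomeo φ) (n : ℕ) {x : X}
    (hper : ∀ s : ℤ, s ≠ 0 → (φ ^ s) x ≠ x) : ∃ t : ClopenTower φ n, x ∈ t.base := by
  obtain ⟨A, hA, hxA, hdisj⟩ := exists_isClopen_pairwise_disjoint_level hper n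
  exact ⟨⟨A, hA, hφ.returnsTo hA.isOpen ⟨x, hxA⟩, hφ.inv.returnsTo hA.isOpen ⟨x, hxA⟩, hdisj⟩,
    hxA⟩

namespace ClopenTower

variable {X : Type*} [TopologicalSpace X] {φ : X ≃ₜ X} {n : ℕ} (t : ClopenTower φ n)

lemma eq_of_mem_level {i j : Fin n} {y : X} (hi : y ∈ level φ t.base i)
    (hj : y ∈ level φ t.base j) : i = j := by
  by_contra hij
  exact disjoint_left.1 (t.pairwise_disjoint_level hij) hi hj

noncomputable def returnMap : X ≃ₜ X :=
  _root_.returnMap φ t.isClopen_base t.returnsTo t.returnsTo_inv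

noncomputable def shift (i : Fin n) : X ≃ₜ X := φ ^ (i : ℤ) * t.returnMap * (φ ^ (i : ℤ))⁻¹

lemma shift_zpow_apply (i : Fin n) (m : ℤ) (a : X) :
    (t.shift i ^ m) ((φ ^ (i : ℤ)) a) = (φ ^ (i : ℤ)) ((t.returnMap ^ m) a) := by
  rw [shift, conj_zpow, homeo_mul_apply, homeo_mul_apply]
  congr 2
  exact (φ ^ (i : ℤ)).symm_apply_apply a

lemma shift_mem_topFullGroup (i : Fin n) : t.shift i ∈ topFullGroup φ := by
  have hφi := zpow_mem (self_mem_topFullGroup φ) (i : ℤ)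
  exact mul_mem (mul_mem hφi returnMap_mem_topFullGroup) (inv_mem hφi)

lemma shift_mem_supportedIn (i : Fin n) : t.shift i ∈ supportedIn (level φ t.base i) := by
  rw [level_eq_preimage_inv]
  exact mul_mul_inv_mem_supportedIn returnMap_mem_supportedIn _

lemma pairwise_commute_zpowersHom_shift : Pairwise fun i j => ∀ k l : Multiplicative ℤ,
    Commute (zpowersHom _ (t.shift i) k) (zpowersHom _ (t.shift j) l) := fun i j hij _ _ =>
  commute_of_mem_supportedIn (zpow_mem (t.shift_mem_supportedIn i) _)
    (zpow_mem (t.shift_mem_supportedIn j) _) (t.pairwise_disjoint_level hij)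

noncomputable def shiftHom : (Fin n → Multiplicative ℤ) →* X ≃ₜ X :=
  MonoidHom.noncommPiCoprod (fun i => zpowersHom _ (t.shift i))
    t.pairwise_commute_zpowersHom_shift

lemma shiftHom_mem_topFullGroup (v : Fin n → Multiplicative ℤ) :
    t.shiftHom v ∈ topFullGroup φ := by
  rw [shiftHom, MonoidHom.noncommPiCoprod_apply]
  exact Subgroup.noncommProd_mem _ _ fun i _ => zpow_mem (t.shift_mem_topFullGroup i) _

lemma shiftHom_apply_of_mem (v : Fin n → Multiplicative ℤ) {i : Fin n} {y : X}
    (hy : y ∈ level φ t.base i) : t.shiftHom v y = (t.shift i ^ (v i).toAdd) y := by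
  classical
  rw [shiftHom, MonoidHom.noncommPiCoprod_apply,
    ← Finset.noncommProd_erase_mul _ (Finset.mem_univ i), homeo_mul_apply]
  -- the other factors are supported on the other levels, hence fix the `i`-th level
  refine Subgroup.noncommProd_mem (supportedIn (level φ t.base i)ᶜ) _ (fun j hj => ?_) _
    (not_not.2 (apply_mem_of_mem_supportedIn (zpow_mem (t.shift_mem_supportedIn i) _) hy))
  exact supportedIn_mono (subset_compl_iff_disjoint_right.2
    (t.pairwise_disjoint_level (Finset.ne_of_mem_erase hj)))
      (zpow_mem (t.shift_mem_supportedIn j) _)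

noncomputable def levelCocycle (σ : Equiv.Perm (Fin n)) (y : X) : ℤ :=
  ∑ i : Fin n, (level φ t.base i).indicator (fun _ => (σ i : ℤ) - i) y

lemma continuous_levelCocycle (σ : Equiv.Perm (Fin n)) : Continuous (t.levelCocycle σ) :=
  continuous_finsetSum _ fun i _ =>
    (isClopen_level t.isClopen_base i).continuous_indicator continuous_const

lemma levelCocycle_of_mem (σ : Equiv.Perm (Fin n)) {i : Fin n} {y : X}
    (hy : y ∈ level φ t.base i) : t.levelCocycle σ y = (σ i : ℤ) - i := by
  rw [levelCocycle, Finset.sum_eq_single i, indicator_of_mem hy]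
  · exact fun j _ hji => indicator_of_notMem (fun hj => hji (t.eq_of_mem_level hj hy)) _
  · exact fun hi => absurd (Finset.mem_univ i) hi

lemma levelCocycle_of_forall_notMem (σ : Equiv.Perm (Fin n)) {y : X}
    (hy : ∀ i : Fin n, y ∉ level φ t.base i) : t.levelCocycle σ y = 0 := by
  rw [levelCocycle]
  exact Finset.sum_eq_zero fun i _ => indicator_of_notMem (hy i) _

noncomputable def levelPermFun (σ : Equiv.Perm (Fin n)) (y : X) : X :=
  (φ ^ t.levelCocycle σ y) y

lemma levelPermFun_of_mem (σ : Equiv.Perm (Fin n)) {i : Fin n} {y : X}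
    (hy : y ∈ level φ t.base i) : t.levelPermFun σ y = (φ ^ ((σ i : ℤ) - i)) y := by
  rw [levelPermFun, t.levelCocycle_of_mem σ hy]

lemma levelPermFun_mem_level (σ : Equiv.Perm (Fin n)) {i : Fin n} {y : X}
    (hy : y ∈ level φ t.base i) : t.levelPermFun σ y ∈ level φ t.base (σ i) := by
  rw [t.levelPermFun_of_mem σ hy]
  simpa using zpow_apply_mem_level hy ((σ i : ℤ) - i)

lemma levelPermFun_of_forall_notMem (σ : Equiv.Perm (Fin n)) {y : X}
    (hy : ∀ i : Fin n, y ∉ level φ t.base i) : t.levelPermFun σ y = y := by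
  rw [levelPermFun, t.levelCocycle_of_forall_notMem σ hy, zpow_zero, homeo_one_apply]

lemma levelPermFun_mul (σ τ : Equiv.Perm (Fin n)) (y : X) :
    t.levelPermFun (σ * τ) y = t.levelPermFun σ (t.levelPermFun τ y) := by
  by_cases hy : ∃ i : Fin n, y ∈ level φ t.base i
  · obtain ⟨i, hi⟩ := hy
    rw [t.levelPermFun_of_mem σ (t.levelPermFun_mem_level τ hi), t.levelPermFun_of_mem τ hi,
      t.levelPermFun_of_mem _ hi, ← homeo_zpow_add_apply, Equiv.Perm.mul_apply,
      sub_add_sub_cancel]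
  · rw [not_exists] at hy
    rw [t.levelPermFun_of_forall_notMem _ hy, t.levelPermFun_of_forall_notMem _ hy,
      t.levelPermFun_of_forall_notMem _ hy]

lemma levelPermFun_one (y : X) : t.levelPermFun 1 y = y := by
  by_cases hy : ∃ i : Fin n, y ∈ level φ t.base i
  · obtain ⟨i, hi⟩ := hy
    rw [t.levelPermFun_of_mem 1 hi, Equiv.Perm.one_apply, sub_self, zpow_zero, homeo_one_apply]
  · rw [not_exists] at hy
    exact t.levelPermFun_of_forall_notMem 1 hy

lemma levelPermFun_inv_levelPermFun (σ : Equiv.Perm (Fin n)) (y : X) :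
    t.levelPermFun σ⁻¹ (t.levelPermFun σ y) = y := by
  rw [← levelPermFun_mul, inv_mul_cancel, levelPermFun_one]

noncomputable def levelPerm (σ : Equiv.Perm (Fin n)) : X ≃ₜ X where
  toFun := t.levelPermFun σ
  invFun := t.levelPermFun σ⁻¹
  left_inv := t.levelPermFun_inv_levelPermFun σ
  right_inv y := by simpa using t.levelPermFun_inv_levelPermFun σ⁻¹ y
  continuous_toFun := continuous_zpow_apply (t.continuous_levelCocycle σ)
  continuous_invFun := continuous_zpow_apply (t.continuous_levelCocycle σ⁻¹)

lemma levelPerm_mem_topFullGroup (σ : Equiv.Perm (Fin n)) : t.levelPerm σ ∈ topFullGroup φ :=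
  ⟨_, t.continuous_levelCocycle σ, fun _ => rfl⟩

noncomputable def levelPermHom : Equiv.Perm (Fin n) →* X ≃ₜ X :=
  MonoidHom.mk' t.levelPerm fun σ τ => Homeomorph.ext (t.levelPermFun_mul σ τ)

lemma levelPermHom_apply_of_mem (σ : Equiv.Perm (Fin n)) {i : Fin n} {y : X}
    (hy : y ∈ level φ t.base i) : t.levelPermHom σ y = (φ ^ ((σ i : ℤ) - i)) y := by
  rw [← t.levelPermFun_of_mem σ hy]
  rfl

lemma levelPermHom_mul_shift_mul_inv (σ : Equiv.Perm (Fin n)) (i : Fin n) :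
    t.levelPermHom σ * t.shift i * (t.levelPermHom σ)⁻¹ = t.shift (σ i) := by
  rw [conj_eq_conj_of_eqOn (t.shift_mem_supportedIn i) fun _ hy =>
    t.levelPermHom_apply_of_mem σ hy, shift, shift]
  group

lemma shiftHom_comp_permOnZn (σ : Equiv.Perm (Fin n)) :
    t.shiftHom.comp (permOnZn n σ).toMonoidHom =
      (MulAut.conj (t.levelPermHom σ)).toMonoidHom.comp t.shiftHom := by
  classical
  refine MonoidHom.pi_ext fun i k => ?_
  have hσ : permOnZn n σ (Pi.mulSingle i k) = Pi.mulSingle (σ i) k := by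
    have := Pi.mulSingle_comp_equiv σ.symm i k
    rwa [Equiv.symm_symm] at this
  simp only [MonoidHom.comp_apply, MulEquiv.coe_toMonoidHom, hσ, shiftHom,
    MonoidHom.noncommPiCoprod_mulSingle, zpowersHom_apply, MulAut.conj_apply, ← conj_zpow,
    levelPermHom_mul_shift_mul_inv]

noncomputable def wreathHom :
    (Fin n → Multiplicative ℤ) ⋊[permOnZn n] Equiv.Perm (Fin n) →* X ≃ₜ X :=
  SemidirectProduct.lift t.shiftHom t.levelPermHom t.shiftHom_comp_permOnZn

lemma wreathHom_mem_topFullGroup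
    (w : (Fin n → Multiplicative ℤ) ⋊[permOnZn n] Equiv.Perm (Fin n)) :
    t.wreathHom w ∈ topFullGroup φ :=
  mul_mem (t.shiftHom_mem_topFullGroup w.left) (t.levelPerm_mem_topFullGroup w.right)

lemma wreathHom_apply_zpow_apply (v : Fin n → Multiplicative ℤ) (σ : Equiv.Perm (Fin n))
    (i : Fin n) {a : X} (ha : a ∈ t.base) :
    t.wreathHom ⟨v, σ⟩ ((φ ^ (i : ℤ)) a) =
      (φ ^ (σ i : ℤ)) ((t.returnMap ^ (v (σ i)).toAdd) a) := by
  change t.shiftHom v (t.levelPermHom σ ((φ ^ (i : ℤ)) a)) = _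
  rw [t.levelPermHom_apply_of_mem σ (zpow_apply_mem_level_of_mem ha i), ← homeo_zpow_add_apply,
    sub_add_cancel, t.shiftHom_apply_of_mem v (zpow_apply_mem_level_of_mem ha (σ i)),
    shift_zpow_apply]

/-- Evaluating at the points `φ ^ i x` of the orbit of an aperiodic point `x` of the base
recovers first `σ`, then `v`. -/
lemma wreathHom_injective {x : X} (hx : x ∈ t.base) (hper : ∀ s : ℤ, s ≠ 0 → (φ ^ s) x ≠ x) :
    Injective t.wreathHom := by
  rw [injective_iff_map_eq_one]
  rintro ⟨v, σ⟩ hvσ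
  have hfix : ∀ i : Fin n,
      (φ ^ (σ i : ℤ)) ((t.returnMap ^ (v (σ i)).toAdd) x) = (φ ^ (i : ℤ)) x := fun i => by
    rw [← t.wreathHom_apply_zpow_apply v σ i hx, hvσ, homeo_one_apply]
  have hσ : ∀ i, σ i = i := fun i => t.eq_of_mem_level
    (hfix i ▸ zpow_apply_mem_level_of_mem
      (apply_mem_of_mem_supportedIn (zpow_mem returnMap_mem_supportedIn _) hx) _)
    (zpow_apply_mem_level_of_mem hx i)
  have hv : ∀ i, v i = 1 := fun i => by
    have := hfix i
    rw [hσ] at this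
    by_contra hvi
    exact returnMap_zpow_apply_ne hx hper (toAdd_eq_zero.not.2 hvi)
      ((φ ^ (i : ℤ)).injective this)
  rw [SemidirectProduct.ext_iff]
  exact ⟨funext hv, Equiv.ext hσ⟩

end ClopenTower

/-- For a minimal Cantor system `(X,φ)`, each permutational wreath product
`ℤ ≀_n S_n = ℤ^n ⋊ S_n` embeds into the topological full group `𝔗(φ)`. -/
theorem wreath_product_embeds_into_topFullGroup {X : Type*} [TopologicalSpace X]
    (hX : IsCantorSpace X) (φ : X ≃ₜ X) (hmin : IsMinimalHomeo φ) :
    ∀ n : ℕ, 1 ≤ n →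
      ∃ ψ : (Fin n → Multiplicative ℤ) ⋊[permOnZn n] Equiv.Perm (Fin n) →*
          ↥(topFullGroup φ), Function.Injective ψ := by
  intro n _
  obtain ⟨E⟩ := hX
  have : CompactSpace X := E.symm.compactSpace
  have : T2Space X := E.symm.t2Space
  have : TotallyDisconnectedSpace X := E.symm.totallyDisconnectedSpace
  have : Infinite X := Infinite.of_injective E.symm E.symm.injective
  have hper : ∀ s : ℤ, s ≠ 0 → (φ ^ s) (E.symm default) ≠ E.symm default :=
    fun s hs => hmin.zpow_apply_ne hs _
  obtain ⟨t, hxt⟩ := hmin.exists_clopenTower n hper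
  exact ⟨t.wreathHom.codRestrict _ t.wreathHom_mem_topFullGroup,
    fun _ _ h => t.wreathHom_injective hxt hper (congrArg Subtype.val h)⟩
end

section
/- Let (X,φ) be a minimal Cantor system and let x ∈ X. Then every clopen neighborhood U of x contains a clopen neighborhood V of x such that the class [1_V] of the indicator function of V is 2-divisible in K⁰(X,φ); that is, there exist continuous functions h, f : X → ℤ with 1_V = 2h + (f − f∘φ⁻¹). -/
open Filter Topology Set

instance Pi.perfectSpace {ι : Type*} {Y : ι → Type*} [∀ i, TopologicalSpace (Y i)]
    [∀ i, Nontrivial (Y i)] [Infinite ι] : PerfectSpace (∀ i, Y i) := by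
  classical
  refine perfectSpace_iff_forall_not_isolated.mpr fun a => ?_
  choose b hb using fun i => exists_ne (a i)
  have : Tendsto (fun j => Function.update a j (b j)) cofinite (𝓝[≠] a) := by
    refine tendsto_nhdsWithin_iff.mpr ⟨tendsto_pi_nhds.mpr fun i => ?_, ?_⟩
    · refine tendsto_const_nhds.congr' ?_
      filter_upwards [eventually_cofinite_ne i] with j hj
      rw [Function.update_of_ne hj.symm]
    · exact Eventually.of_forall fun j h => hb j (by simpa using congr_fun h j)
  exact this.neBot

theorem Homeomorph.perfectSpace {X Y : Type*} [TopologicalSpace X] [TopologicalSpace Y]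
    (e : X ≃ₜ Y) [PerfectSpace Y] : PerfectSpace X := by
  refine perfectSpace_iff_forall_not_isolated.mpr fun x => ?_
  have := e.symm.map_punctured_nhds_eq (e x)
  rw [e.symm_apply_apply] at this
  exact this ▸ (PerfectSpace.not_isolated (e x)).map _

theorem Homeomorph.totallySeparatedSpace {X Y : Type*} [TopologicalSpace X] [TopologicalSpace Y]
    (e : X ≃ₜ Y) [TotallySeparatedSpace Y] : TotallySeparatedSpace X := by
  refine totallySeparatedSpace_iff_exists_isClopen.mpr fun x y hxy => ?_
  obtain ⟨A, hA, hxA, hyA⟩ := exists_isClopen_of_totally_separated (e.injective.ne hxy)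
  exact ⟨e ⁻¹' A, hA.preimage e.continuous, hxA, hyA⟩

theorem Equiv.indicator_union_image {α M : Type*} [AddMonoid M] (e : α ≃ α) {V : Set α}
    (h : Disjoint V (e '' V)) (c : M) :
    (V ∪ e '' V).indicator (fun _ => c) =
      V.indicator (fun _ => c) + V.indicator (fun _ => c) ∘ e.symm := by
  rw [indicator_union_of_disjoint h, e.image_eq_preimage_symm]
  rfl

section Coboundaries

variable {X : Type*} [TopologicalSpace X] (G : Type*) [AddCommGroup G] [TopologicalSpace G]
  [IsTopologicalAddGroup G] (φ : X ≃ₜ X)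

/-- With `G = ℤ`, `K⁰(X, φ)` is `C(X, ℤ)` modulo these. -/
def coboundaries : AddSubgroup (X → G) where
  carrier := {u | ∃ f, Continuous f ∧ u = f - f ∘ φ.symm}
  zero_mem' := ⟨0, continuous_const, by simp⟩
  add_mem' := by
    rintro _ _ ⟨f, hf, rfl⟩ ⟨f', hf', rfl⟩
    refine ⟨f + f', hf.add hf', ?_⟩
    ext
    simp only [Pi.add_apply, Pi.sub_apply, Function.comp_apply]
    abel
  neg_mem' := by
    rintro _ ⟨f, hf, rfl⟩
    refine ⟨-f, hf.neg, ?_⟩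
    ext
    simp only [Pi.neg_apply, Pi.sub_apply, Function.comp_apply]
    abel

/-- The homeomorphisms acting trivially on `K⁰(X, φ; G)`. -/
def coinvariantStabilizer : Subgroup (X ≃ₜ X) where
  carrier := {ψ | ∀ g : X → G, Continuous g → g ∘ ψ - g ∈ coboundaries G φ}
  one_mem' g _ := by
    convert (coboundaries G φ).zero_mem
    ext; simp
  mul_mem' := by
    intro ψ₁ ψ₂ h₁ h₂ g hg
    have := add_mem (h₂ (g ∘ ψ₁) (hg.comp ψ₁.continuous)) (h₁ g hg)
    convert this using 1
    ext; simp
  inv_mem' := by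
    intro ψ h g hg
    have := neg_mem (h (g ∘ ψ.symm) (hg.comp ψ.symm.continuous))
    convert this using 1
    ext y; simp

theorem self_mem_coinvariantStabilizer : φ ∈ coinvariantStabilizer G φ :=
  fun g hg => ⟨g ∘ φ, hg.comp φ.continuous, by ext; simp⟩

theorem comp_zpow_sub_mem_coboundaries {g : X → G} (hg : Continuous g) (n : ℤ) :
    g ∘ (φ ^ n) - g ∈ coboundaries G φ :=
  zpow_mem (self_mem_coinvariantStabilizer G φ) n g hg

end Coboundaries

theorem IsMinimalHomeo.exists_zpow_apply_mem_ne {X : Type*} [TopologicalSpace X] [T1Space X]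
    [PerfectSpace X] {φ : X ≃ₜ X} (hmin : IsMinimalHomeo φ) {x : X} {U : Set X} (hU : IsOpen U)
    (hxU : x ∈ U) : ∃ n : ℤ, (φ ^ n) x ∈ U ∧ (φ ^ n) x ≠ x := by
  have hne : (U \ {x}).Nonempty := by
    rw [sdiff_eq, inter_comm]
    exact Filter.nonempty_of_mem (inter_mem_nhdsWithin {x}ᶜ (hU.mem_nhds hxU))
  obtain ⟨_, ⟨n, rfl⟩, hn⟩ := (hmin x).exists_mem_open (hU.sdiff isClosed_singleton) hne
  exact ⟨n, hn.1, hn.2⟩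

theorem exists_isClopen_disjoint_image_subset {X : Type*} [TopologicalSpace X]
    [TotallySeparatedSpace X] (ψ : X ≃ₜ X) {U : Set X} (hU : IsClopen U) {x : X} (hxU : x ∈ U)
    (hψx : ψ x ∈ U) (hne : ψ x ≠ x) :
    ∃ V, IsClopen V ∧ x ∈ V ∧ V ∪ ψ '' V ⊆ U ∧ Disjoint V (ψ '' V) := by
  obtain ⟨A, hA, hxA, hψA⟩ := exists_isClopen_of_totally_separated hne.symm
  refine ⟨U ∩ A ∩ ψ ⁻¹' (U \ A), (hU.inter hA).inter ((hU.diff hA).preimage ψ.continuous),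
    ⟨⟨hxU, hxA⟩, hψx, hψA⟩, ?_, ?_⟩
  · rintro _ (⟨⟨hy, -⟩, -⟩ | ⟨y, ⟨-, hy, -⟩, rfl⟩) <;> exact hy
  · rw [Set.disjoint_left]
    rintro _ ⟨⟨-, hA⟩, -⟩ ⟨y, ⟨-, -, hyA⟩, rfl⟩
    exact hyA hA

theorem IsMinimalHomeo.exists_isClopen_indicator_sub_two_smul_mem_coboundaries {X : Type*}
    [TopologicalSpace X] [PerfectSpace X] [TotallySeparatedSpace X] {φ : X ≃ₜ X}
    (hmin : IsMinimalHomeo φ) {x : X} {U : Set X} (hU : IsClopen U) (hxU : x ∈ U) :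
    ∃ V, IsClopen V ∧ x ∈ V ∧ V ⊆ U ∧
      ∃ h : X → ℤ, Continuous h ∧ V.indicator (fun _ => 1) - 2 • h ∈ coboundaries ℤ φ := by
  obtain ⟨n, hnU, hnx⟩ := hmin.exists_zpow_apply_mem_ne hU.isOpen hxU
  obtain ⟨V, hV, hxV, hVU, hdisj⟩ := exists_isClopen_disjoint_image_subset (φ ^ n) hU hxU hnU hnx
  have hg : Continuous (V.indicator fun _ => (1 : ℤ)) :=
    LocallyConstant.coe_charFn ℤ hV ▸ (LocallyConstant.charFn ℤ hV).continuous
  refine ⟨V ∪ (φ ^ n) '' V, hV.union ⟨(φ ^ n).isClosedMap _ hV.1, (φ ^ n).isOpenMap _ hV.2⟩,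
    Or.inl hxV, hVU, _, hg, ?_⟩
  convert comp_zpow_sub_mem_coboundaries ℤ φ hg (-n) using 1
  have hunion := (φ ^ n).toEquiv.indicator_union_image hdisj (1 : ℤ)
  rw [Homeomorph.coe_toEquiv] at hunion
  rw [hunion, zpow_neg, two_smul]
  abel

/-- In a minimal Cantor system, every clopen neighbourhood `U` of `x`
contains a clopen neighbourhood `V` of `x` whose indicator class is 2-divisible in
`K⁰(X,φ) = C(X,ℤ)/{f - f∘φ⁻¹}`. -/
theorem exists_two_divisible_clopen_neighbourhood {X : Type*} [TopologicalSpace X]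
    (hX : IsCantorSpace X) (φ : X ≃ₜ X) (hmin : IsMinimalHomeo φ)
    (x : X) (U : Set X) (hU : IsClopen U) (hxU : x ∈ U) :
    ∃ V : Set X, IsClopen V ∧ x ∈ V ∧ V ⊆ U ∧
      ∃ h f : X → ℤ, Continuous h ∧ Continuous f ∧
        ∀ y : X, V.indicator (fun _ => (1 : ℤ)) y = 2 * h y + (f y - f (φ.symm y)) := by
  obtain ⟨e⟩ := hX
  have := e.perfectSpace
  have := e.totallySeparatedSpace
  obtain ⟨V, hV, hxV, hVU, h, hh, f, hf, hcob⟩ :=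
    hmin.exists_isClopen_indicator_sub_two_smul_mem_coboundaries hU hxU
  refine ⟨V, hV, hxV, hVU, h, f, hh, hf, fun y => ?_⟩
  have hy := congr_fun hcob y
  simp only [Pi.sub_apply, two_nsmul, Pi.add_apply, Function.comp_apply] at hy
  linarith
end

section
/- For i ∈ {1,2} let X_i be a Cantor space and let G_i be a group of homeomorphisms of X_i of class F. Let α : G₁ → G₂ be a group isomorphism, and for x ∈ X₁ set T(x) := {g ∈ G₁ : x ∈ supp(g) and g² = 1} and P(x) := ⋂_{g ∈ T(x)} supp(α(g)). Then P(x) is a singleton for every x ∈ X₁, and the map h : X₁ → X₂ sending each x to the unique point of P(x) is a homeomorphism satisfying α(g) = h ∘ g ∘ h⁻¹ for all g ∈ G₁. -/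
/-- The support of a homeomorphism: the closure of the set of non-fixed points. -/
def homeoSupp {X : Type*} [TopologicalSpace X] (g : X ≃ₜ X) : Set X :=
  closure {x | g x ≠ x}

/-- A group of homeomorphisms of a Cantor space is of *class F* (Matui). -/
def IsClassF {X : Type*} [TopologicalSpace X] (G : Subgroup (X ≃ₜ X)) : Prop :=
  (∀ g ∈ G, g * g = 1 → IsClopen (homeoSupp g)) ∧
  (∀ U : Set X, IsClopen U → ∀ x ∈ U,
      ∃ g ∈ G, g ≠ 1 ∧ g * g = 1 ∧ x ∈ homeoSupp g ∧ homeoSupp g ⊆ U) ∧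
  (∀ g ∈ G, g ≠ 1 → g * g = 1 → ∀ U : Set X, U.Nonempty → IsClopen U → U ⊆ homeoSupp g →
      ∃ g' ∈ G, g' ≠ 1 ∧ homeoSupp g' ⊆ U ∪ ⇑g '' U ∧ ∀ x ∈ homeoSupp g', g x = g' x) ∧
  (∀ U : Set X, U.Nonempty → IsClopen U → ∃ g ∈ G, homeoSupp g ⊆ U ∧ g * g ≠ 1)

/-!
Supports of involutions in a class-F group are clopen, and whether two of them overlap is a
group-theoretic property: `supp σ ∩ supp τ ≠ ∅` iff `σ, τ` do not commute or some `f` is inverted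
by both with `f⁴ ≠ 1`. With disjoint supports every such `f` has `f⁴ = 1`; with overlapping
commuting supports an iterated commutator `⁅⁅h, τ⁆, σ⁆` (or `⁅h, σ⁆`) of an element `h` living in
a small clopen set is such an `f`. So `α` preserves overlap, hence inclusion, of supports of
involutions. For each `x` the sets `supp (α g)`, `g ∈ T(x)`, form a directed family of nonempty
clopen sets, so `P(x)` is nonempty by compactness; any `y ∈ P(x)` satisfies
`x ∈ supp g ↔ y ∈ supp (α g)` for all involutions `g`, and as these supports separate points this
determines `y`. That correspondence is symmetric in `α` and `α⁻¹`, and continuity, bijectivity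
and equivariance of `x ↦ y` all follow from it.
-/

open Set Function
open scoped commutatorElement

section Group

variable {H K : Type*} [Group H] [Group K]

lemma map_mul_self_eq_one {F : Type*} [FunLike F H K] [MonoidHomClass F H K] (φ : F) {a : H}
    (ha : a * a = 1) : φ a * φ a = 1 := by
  rw [← map_mul, ha, map_one]

lemma MulEquiv.mul_self_eq_one_iff (e : H ≃* K) {a : H} : e a * e a = 1 ↔ a * a = 1 := by
  rw [← map_mul, MulEquiv.map_eq_one_iff]

lemma conj_commutatorElement_of_mul_self_eq_one {s : H} (hs : s * s = 1) (h : H) :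
    s * ⁅h, s⁆ * s⁻¹ = ⁅h, s⁆⁻¹ := by
  have : s⁻¹ = s := inv_eq_of_mul_eq_one_right hs
  rw [commutatorElement_inv, commutatorElement_def, commutatorElement_def, this]
  calc s * (h * s * h⁻¹ * s) * s = s * h * s * h⁻¹ * (s * s) := by group
    _ = s * h * s * h⁻¹ := by rw [hs, mul_one]

lemma commutatorElement_inv_left_of_commute {p s : H} (hp : Commute p (s * p * s⁻¹)) :
    ⁅p⁻¹, s⁆ = ⁅p, s⁆⁻¹ := by
  rw [commutatorElement_inv, commutatorElement_def, commutatorElement_def, inv_inv]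
  calc p⁻¹ * s * p * s⁻¹ = p⁻¹ * (s * p * s⁻¹) := by group
    _ = s * p * s⁻¹ * p⁻¹ := hp.inv_left.eq

/-- For involutions of a class-F group this says exactly that their supports meet
(`IsClassF.homeoSupp_inter_nonempty_iff`). -/
def AlgOverlap (σ τ : H) : Prop :=
  ¬Commute σ τ ∨ ∃ f, σ * f * σ⁻¹ = f⁻¹ ∧ τ * f * τ⁻¹ = f⁻¹ ∧ f ^ 4 ≠ 1

lemma AlgOverlap.map {F : Type*} [FunLike F H K] [MonoidHomClass F H K] {φ : F}
    (hφ : Injective φ) {σ τ : H} : AlgOverlap σ τ → AlgOverlap (φ σ) (φ τ)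
  | .inl h => .inl fun h' => h (h'.of_map hφ)
  | .inr ⟨f, hσ, hτ, h4⟩ => .inr ⟨φ f, by simp only [← map_inv, ← map_mul, hσ],
      by simp only [← map_inv, ← map_mul, hτ], by rwa [← map_pow, ne_eq, map_eq_one_iff φ hφ]⟩

lemma MulEquiv.algOverlap_iff (e : H ≃* K) {σ τ : H} :
    AlgOverlap (e σ) (e τ) ↔ AlgOverlap σ τ :=
  ⟨fun h => by simpa using h.map e.symm.injective, fun h => h.map e.injective⟩

end Group

namespace Equiv.Perm

variable {α : Type*}

def IsSupportedIn (g : Perm α) (V : Set α) : Prop :=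
  ∀ ⦃x⦄, g x ≠ x → x ∈ V

namespace IsSupportedIn

variable {f g h σ τ : Perm α} {V W : Set α}

lemma mono (hg : g.IsSupportedIn V) (hVW : V ⊆ W) : g.IsSupportedIn W :=
  fun _ hx => hVW (hg hx)

lemma inv (hg : g.IsSupportedIn V) : g⁻¹.IsSupportedIn V := fun x hx =>
  hg fun hgx => hx (by rw [inv_eq_iff_eq, hgx])

lemma mul (hg : g.IsSupportedIn V) (hh : h.IsSupportedIn W) :
    (g * h).IsSupportedIn (V ∪ W) := fun x hx => by
  by_contra hVW
  simp only [mem_union, not_or] at hVW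
  have hhx : h x = x := by_contra fun hne => hVW.2 (hh hne)
  have hgx : g x = x := by_contra fun hne => hVW.1 (hg hne)
  exact hx (by rw [mul_apply, hhx, hgx])

lemma conj (hg : g.IsSupportedIn V) (s : Perm α) : (s * g * s⁻¹).IsSupportedIn (s '' V) :=
  fun x hx => ⟨s⁻¹ x, hg fun h => hx <| by
    rw [mul_apply, mul_apply, h]
    exact s.apply_symm_apply x, by simp⟩

lemma commutatorElement (hg : g.IsSupportedIn V) (s : Perm α) :
    ⁅g, s⁆.IsSupportedIn (V ∪ s '' V) := by
  rw [commutatorElement_def, mul_assoc, mul_assoc, ← mul_assoc s]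
  exact hg.mul (hg.inv.conj s)

lemma disjoint (hg : g.IsSupportedIn V) (hh : h.IsSupportedIn W) (hVW : _root_.Disjoint V W) :
    g.Disjoint h := fun x => by
  by_contra hx
  push Not at hx
  exact Set.disjoint_left.1 hVW (hg hx.1) (hh hx.2)

lemma conj_eq_of_eqOn (hf : f.IsSupportedIn W) (hστ : EqOn σ τ W) :
    τ * f * τ⁻¹ = σ * f * σ⁻¹ := by
  have hk : (σ⁻¹ * τ).Disjoint f := fun x => by
    by_cases hx : x ∈ W
    · left
      simp [← hστ hx]
    · exact Or.inr (by_contra fun hfx => hx (hf hfx))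
  calc τ * f * τ⁻¹ = σ * ((σ⁻¹ * τ) * f) * (σ⁻¹ * τ)⁻¹ * σ⁻¹ := by group
    _ = σ * (f * (σ⁻¹ * τ)) * (σ⁻¹ * τ)⁻¹ * σ⁻¹ := by rw [hk.commute.eq]
    _ = σ * f * σ⁻¹ := by group

end IsSupportedIn

lemma Disjoint.mul_pow_ne_one {a b : Perm α} (hab : a.Disjoint b) {n : ℕ} (ha : a ^ n ≠ 1) :
    (a * b) ^ n ≠ 1 := by
  rw [hab.commute.mul_pow]
  exact fun h => ha ((hab.pow_disjoint_pow n n).mul_eq_one_iff.1 h).1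

lemma IsSupportedIn.commutatorElement_pow_ne_one {h s : Perm α} {V : Set α}
    (hh : h.IsSupportedIn V) (hV : _root_.Disjoint V (s '' V)) {n : ℕ} (hn : h ^ n ≠ 1) :
    ⁅h, s⁆ ^ n ≠ 1 := by
  rw [commutatorElement_def, mul_assoc, mul_assoc, ← mul_assoc s]
  exact (hh.disjoint (hh.inv.conj s) hV).mul_pow_ne_one hn

lemma disjoint_union_image_of_commute {s t : Perm α} {V : Set α} (hst : Commute s t)
    (ht : t * t = 1) (hs : _root_.Disjoint V (s '' V))
    (hst' : _root_.Disjoint V ((s * t) '' V)) :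
    _root_.Disjoint (V ∪ t '' V) (s '' (V ∪ t '' V)) := by
  rw [Set.disjoint_left]
  rintro _ (hv | ⟨v, hv, rfl⟩) ⟨_, hu | ⟨u, hu, rfl⟩, he⟩
  · exact disjoint_left.1 hs hv ⟨_, hu, he⟩
  · exact disjoint_left.1 hst' hv ⟨_, hu, he⟩
  · refine disjoint_left.1 hst' hv ⟨_, hu, ?_⟩
    rw [hst.eq, mul_apply, he, ← mul_apply, ht, one_apply]
  · refine disjoint_left.1 hs hv ⟨_, hu, t.injective ?_⟩
    rw [← mul_apply, ← hst.eq, mul_apply, he]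

variable {σ τ f : Perm α}

lemma Disjoint.apply_apply_eq_or (hστ : σ.Disjoint τ) (hσ : σ * σ = 1)
    (hσf : σ * f * σ⁻¹ = f⁻¹) (hτf : τ * f * τ⁻¹ = f⁻¹) {x : α} (hx : τ x = x) :
    f (f x) = x ∨ f (f x) = σ x := by
  have hτf' : f⁻¹ x = τ (f x) := by
    rw [← hτf, mul_apply, mul_apply, inv_eq_iff_eq.2 hx.symm]
  rcases hστ (f x) with hσfx | hτfx
  · right
    have h : σ (f (f x)) = x := by
      have := congrArg (· (f x)) hσf
      simp only [mul_apply, inv_eq_iff_eq.2 hσfx.symm, inv_eq_iff_eq.2 rfl] at this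
      exact this
    calc f (f x) = σ (σ (f (f x))) := by rw [← mul_apply σ σ, hσ, one_apply]
      _ = σ x := by rw [h]
  · left
    rw [hτfx, inv_eq_iff_eq] at hτf'
    exact hτf'.symm

lemma Disjoint.pow_four_eq_one (hστ : σ.Disjoint τ) (hσ : σ * σ = 1) (hτ : τ * τ = 1)
    (hσf : σ * f * σ⁻¹ = f⁻¹) (hτf : τ * f * τ⁻¹ = f⁻¹) : f ^ 4 = 1 := by
  have hρ : σ * τ * (σ * τ) = 1 := by
    calc σ * τ * (σ * τ) = σ * (τ * σ) * τ := by group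
      _ = σ * σ * (τ * τ) := by rw [← hστ.commute.eq]; group
      _ = 1 := by rw [hσ, hτ, one_mul]
  have hfρ : ∀ y, f ((σ * τ) y) = (σ * τ) (f y) := by
    suffices σ * τ * f * (σ * τ)⁻¹ = f from
      fun y => DFunLike.congr_fun (mul_inv_eq_iff_eq_mul.1 this).symm y
    calc σ * τ * f * (σ * τ)⁻¹ = σ * (τ * f * τ⁻¹) * σ⁻¹ := by group
      _ = (σ * f * σ⁻¹)⁻¹ := by rw [hτf]; group
      _ = f := by rw [hσf, inv_inv]
  have hff : ∀ x, f (f x) = x ∨ f (f x) = (σ * τ) x := fun x => by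
    rcases hστ x with hσx | hτx
    · rw [hστ.commute.eq, mul_apply, hσx]
      exact hστ.symm.apply_apply_eq_or hτ hτf hσf hσx
    · rw [mul_apply, hτx]
      exact hστ.apply_apply_eq_or hσ hσf hτf hτx
  ext x
  rw [show (f ^ 4) x = f (f (f (f x))) by simp [pow_succ], one_apply]
  rcases hff x with h | h
  · rw [h, h]
  · rw [h, hfρ, hfρ, h, ← mul_apply (σ * τ), hρ, one_apply]

lemma Disjoint.not_algOverlap (hστ : σ.Disjoint τ) (hσ : σ * σ = 1) (hτ : τ * τ = 1) :
    ¬AlgOverlap σ τ := by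
  rintro (h | ⟨f, hσf, hτf, h4⟩)
  · exact h hστ.commute
  · exact h4 (hστ.pow_four_eq_one hσ hτ hσf hτf)

end Equiv.Perm

section Homeomorph

variable {X : Type*} [TopologicalSpace X]

def Subgroup.toPerm (G : Subgroup (X ≃ₜ X)) : G →* Equiv.Perm X where
  toFun g := (g : X ≃ₜ X).toEquiv
  map_one' := rfl
  map_mul' _ _ := rfl

@[simp] lemma Subgroup.coe_toPerm (G : Subgroup (X ≃ₜ X)) (g : G) :
    ⇑(G.toPerm g) = ⇑(g : X ≃ₜ X) := rfl

lemma Subgroup.toPerm_injective (G : Subgroup (X ≃ₜ X)) : Injective G.toPerm :=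
  fun _ _ h => Subtype.ext (Homeomorph.toEquiv_injective h)

lemma homeoSupp_conj (f k : X ≃ₜ X) : homeoSupp (f⁻¹ * k * f) = f ⁻¹' homeoSupp k := by
  rw [homeoSupp, homeoSupp, Homeomorph.preimage_closure]
  congr! 1
  ext x
  simp only [homeo_mul_apply, mem_preimage, ne_eq]
  exact not_congr f.symm_apply_eq

lemma isSupportedIn_of_homeoSupp_subset {G : Subgroup (X ≃ₜ X)} {g : G} {V : Set X}
    (h : homeoSupp (g : X ≃ₜ X) ⊆ V) : (G.toPerm g).IsSupportedIn V :=
  fun _ hx => h (subset_closure hx)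

end Homeomorph

section Stone

variable {X : Type*} [TopologicalSpace X] [CompactSpace X] [T2Space X] [TotallyDisconnectedSpace X]

lemma exists_isClopen_disjoint_image {f : X → X} (hf : Continuous f) {z : X} (hz : f z ≠ z) :
    ∃ V, IsClopen V ∧ z ∈ V ∧ Disjoint V (f '' V) := by
  obtain ⟨u, v, hu, hv, hzu, hzv, huv⟩ := t2_separation hz.symm
  obtain ⟨V, ⟨hzV, hV⟩, hVuv⟩ :=
    (nhds_basis_clopen z).mem_iff.1 ((hu.inter (hv.preimage hf)).mem_nhds ⟨hzu, hzv⟩)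
  exact ⟨V, hV, hzV, huv.mono (hVuv.trans inter_subset_left)
    (image_subset_iff.2 (hVuv.trans inter_subset_right))⟩

end Stone

namespace IsClassF

variable {X : Type*} [TopologicalSpace X] {G : Subgroup (X ≃ₜ X)}

lemma isClopen_homeoSupp (hG : IsClassF G) {g : G} (hg : g * g = 1) :
    IsClopen (homeoSupp (g : X ≃ₜ X)) :=
  hG.1 g g.2 (congrArg Subtype.val hg)

lemma exists_involution (hG : IsClassF G) {U : Set X} (hU : IsClopen U) {x : X} (hx : x ∈ U) :
    ∃ g : G, g * g = 1 ∧ x ∈ homeoSupp (g : X ≃ₜ X) ∧ homeoSupp (g : X ≃ₜ X) ⊆ U := by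
  obtain ⟨g, hgG, -, hg, hxg, hgU⟩ := hG.2.1 U hU x hx
  exact ⟨⟨g, hgG⟩, Subtype.ext hg, hxg, hgU⟩

lemma exists_mul_self_ne_one (hG : IsClassF G) {U : Set X} (hU : IsClopen U)
    (hne : U.Nonempty) : ∃ g : G, g * g ≠ 1 ∧ (G.toPerm g).IsSupportedIn U := by
  obtain ⟨g, hgG, hgU, hg⟩ := hG.2.2.2 U hne hU
  exact ⟨⟨g, hgG⟩, fun h => hg (congrArg Subtype.val h), isSupportedIn_of_homeoSupp_subset hgU⟩

lemma homeoSupp_subset_iff (hG : IsClassF G) {a b : G} (ha : a * a = 1) (hb : b * b = 1) :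
    homeoSupp (a : X ≃ₜ X) ⊆ homeoSupp (b : X ≃ₜ X) ↔ ∀ k : G, k * k = 1 →
      (homeoSupp (k : X ≃ₜ X) ∩ homeoSupp (a : X ≃ₜ X)).Nonempty →
      (homeoSupp (k : X ≃ₜ X) ∩ homeoSupp (b : X ≃ₜ X)).Nonempty := by
  refine ⟨fun hab k _ => Nonempty.mono (inter_subset_inter_right _ hab), fun h y hya => ?_⟩
  by_contra hyb
  obtain ⟨k, hk, hyk, hkU⟩ := hG.exists_involution
    ((hG.isClopen_homeoSupp ha).inter (hG.isClopen_homeoSupp hb).compl) ⟨hya, hyb⟩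
  obtain ⟨w, hwk, hwb⟩ := h k hk ⟨y, hyk, hya⟩
  exact (hkU hwk).2 hwb

variable [CompactSpace X] [T2Space X] [TotallyDisconnectedSpace X]

lemma exists_involution_of_isOpen (hG : IsClassF G) {U : Set X} (hU : IsOpen U) {x : X}
    (hx : x ∈ U) :
    ∃ g : G, g * g = 1 ∧ x ∈ homeoSupp (g : X ≃ₜ X) ∧ homeoSupp (g : X ≃ₜ X) ⊆ U := by
  obtain ⟨V, ⟨hxV, hV⟩, hVU⟩ := (nhds_basis_clopen x).mem_iff.1 (hU.mem_nhds hx)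
  obtain ⟨g, hg, hxg, hgV⟩ := hG.exists_involution hV hxV
  exact ⟨g, hg, hxg, hgV.trans hVU⟩

lemma eq_of_forall_mem_homeoSupp_iff (hG : IsClassF G) {x y : X}
    (h : ∀ g : G, g * g = 1 → (x ∈ homeoSupp (g : X ≃ₜ X) ↔ y ∈ homeoSupp (g : X ≃ₜ X))) :
    x = y := by
  by_contra hxy
  obtain ⟨g, hg, hxg, hgU⟩ := hG.exists_involution_of_isOpen isOpen_compl_singleton hxy
  exact hgU ((h g hg).1 hxg) rfl

lemma exists_pow_four_ne_one (hG : IsClassF G) {V : Set X} (hV : IsClopen V)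
    (hne : V.Nonempty) : ∃ h : G, (G.toPerm h).IsSupportedIn V ∧ G.toPerm h ^ 4 ≠ 1 := by
  obtain ⟨z, hz⟩ := hne
  obtain ⟨c, hc, hzc, hcV⟩ := hG.exists_involution hV hz
  obtain ⟨w, hw⟩ := closure_nonempty_iff.1 ⟨z, hzc⟩
  obtain ⟨W, hW, hwW, hWc⟩ := exists_isClopen_disjoint_image (c : X ≃ₜ X).continuous hw
  obtain ⟨g, hg, hgW⟩ :=
    hG.exists_mul_self_ne_one (hW.inter hV) ⟨w, hwW, hcV (subset_closure hw)⟩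
  have hcgV := (isSupportedIn_of_homeoSupp_subset hcV).mul (hgW.mono inter_subset_right)
  refine ⟨c * g, by simpa using hcgV, ?_⟩
  -- `(c g)² = (c g c⁻¹) g` is a product of two commuting copies of `g` with disjoint supports.
  have hdisj : (G.toPerm g).Disjoint (G.toPerm (c * g * c⁻¹)) := by
    rw [map_mul, map_mul, map_inv]
    exact hgW.disjoint (hgW.conj _) (hWc.mono inter_subset_left (image_mono inter_subset_left))
  have hc' : c⁻¹ = c := inv_eq_of_mul_eq_one_right hc
  rw [← map_pow, show (c * g) ^ 4 = (c * g * c⁻¹ * g) ^ 2 by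
      rw [hc', pow_mul' _ 2 2, sq (c * g), ← mul_assoc],
    map_pow, map_mul, ← hdisj.commute.eq]
  exact hdisj.mul_pow_ne_one (by rwa [sq, ← map_mul, ne_eq, map_eq_one_iff _ G.toPerm_injective])

lemma algOverlap_of_eqOn (hG : IsClassF G) {σ τ : G} (hσ : σ * σ = 1) (hστ : Commute σ τ)
    {O : Set X} (hO : IsOpen O) {z : X} (hzO : z ∈ O) (hz : (σ : X ≃ₜ X) z ≠ z)
    (heq : EqOn (σ : X ≃ₜ X) (τ : X ≃ₜ X) O) : AlgOverlap σ τ := by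
  obtain ⟨V₁, hV₁, hzV₁, hV₁σ⟩ := exists_isClopen_disjoint_image (σ : X ≃ₜ X).continuous hz
  obtain ⟨V₂, ⟨hzV₂, hV₂⟩, hV₂O⟩ := (nhds_basis_clopen z).mem_iff.1 (hO.mem_nhds hzO)
  obtain ⟨h, hhV, hh4⟩ := hG.exists_pow_four_ne_one (hV₁.inter hV₂) ⟨z, hzV₁, hzV₂⟩
  have hVσ : Disjoint (V₁ ∩ V₂) ((σ : X ≃ₜ X) '' (V₁ ∩ V₂)) :=
    hV₁σ.mono inter_subset_left (image_mono inter_subset_left)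
  have hEq : EqOn (G.toPerm σ) (G.toPerm τ) (V₁ ∩ V₂ ∪ (σ : X ≃ₜ X) '' (V₁ ∩ V₂)) := by
    rintro _ (hx | ⟨v, hv, rfl⟩)
    · exact heq (hV₂O hx.2)
    · show G.toPerm σ (G.toPerm σ v) = G.toPerm τ (G.toPerm σ v)
      rw [← Equiv.Perm.mul_apply, ← Equiv.Perm.mul_apply, ← map_mul, ← map_mul, ← hστ.eq,
        map_mul, Equiv.Perm.mul_apply]
      exact congrArg _ (heq (hV₂O hv.2))
  refine .inr ⟨⁅h, σ⁆, conj_commutatorElement_of_mul_self_eq_one hσ h, ?_,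
    ne_one_of_map (f := G.toPerm) ?_⟩
  · rw [← conj_commutatorElement_of_mul_self_eq_one hσ h]
    apply G.toPerm_injective
    simpa only [map_mul, map_inv, map_commutatorElement] using
      (hhV.commutatorElement (G.toPerm σ)).conj_eq_of_eqOn hEq
  · rw [map_pow, map_commutatorElement]
    exact hhV.commutatorElement_pow_ne_one hVσ hh4

lemma algOverlap_of_apply_ne (hG : IsClassF G) {σ τ : G} (hσ : σ * σ = 1) (hτ : τ * τ = 1)
    (hστ : Commute σ τ) {z : X} (hσz : (σ : X ≃ₜ X) z ≠ z) (hτz : (τ : X ≃ₜ X) z ≠ z)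
    (hστz : (σ : X ≃ₜ X) z ≠ (τ : X ≃ₜ X) z) : AlgOverlap σ τ := by
  have hρz : ((σ * τ : G) : X ≃ₜ X) z ≠ z := fun h => hστz <|
    calc (σ : X ≃ₜ X) z = G.toPerm (σ * σ) ((τ : X ≃ₜ X) z) := by
          rw [map_mul, Equiv.Perm.mul_apply]; exact congrArg _ h.symm
      _ = (τ : X ≃ₜ X) z := by rw [hσ, map_one, Equiv.Perm.one_apply]
  obtain ⟨V₁, hV₁, hzV₁, hV₁σ⟩ := exists_isClopen_disjoint_image (σ : X ≃ₜ X).continuous hσz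
  obtain ⟨V₂, hV₂, hzV₂, hV₂τ⟩ := exists_isClopen_disjoint_image (τ : X ≃ₜ X).continuous hτz
  obtain ⟨V₃, hV₃, hzV₃, hV₃ρ⟩ :=
    exists_isClopen_disjoint_image ((σ * τ : G) : X ≃ₜ X).continuous hρz
  set V := V₁ ∩ V₂ ∩ V₃
  have hV : ∀ {W : Set X} {f : X → X}, V ⊆ W → Disjoint W (f '' W) → Disjoint V (f '' V) :=
    fun hVW hW => hW.mono hVW (image_mono hVW)
  obtain ⟨h, hhV, hh4⟩ : ∃ h : G, (G.toPerm h).IsSupportedIn V ∧ G.toPerm h ^ 4 ≠ 1 :=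
    hG.exists_pow_four_ne_one (hV₁.inter hV₂ |>.inter hV₃) ⟨z, ⟨hzV₁, hzV₂⟩, hzV₃⟩
  have hVτ : Disjoint V ((τ : X ≃ₜ X) '' V) :=
    hV (inter_subset_left.trans inter_subset_right) hV₂τ
  -- `p = ⁅h, τ⁆` is inverted by `τ` and supported in `W = V ∪ τ V`, which `σ` moves off itself.
  set p := ⁅h, τ⁆
  have hpW : (G.toPerm p).IsSupportedIn (V ∪ (τ : X ≃ₜ X) '' V) := by
    simpa only [p, map_commutatorElement, Subgroup.coe_toPerm] using
      hhV.commutatorElement (G.toPerm τ)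
  have hp4 : G.toPerm p ^ 4 ≠ 1 := by
    simpa only [p, map_commutatorElement] using
      hhV.commutatorElement_pow_ne_one (s := G.toPerm τ) hVτ hh4
  have hWσ : Disjoint (V ∪ (τ : X ≃ₜ X) '' V) ((σ : X ≃ₜ X) '' (V ∪ (τ : X ≃ₜ X) '' V)) :=
    Equiv.Perm.disjoint_union_image_of_commute (hστ.map G.toPerm)
      (map_mul_self_eq_one G.toPerm hτ)
      (hV (inter_subset_left.trans inter_subset_left) hV₁σ) (hV inter_subset_right hV₃ρ)
  have hcomm : Commute p (σ * p * σ⁻¹) := by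
    refine Commute.of_map G.toPerm_injective ?_
    rw [map_mul, map_mul, map_inv]
    exact (hpW.disjoint (hpW.conj _) hWσ).commute
  refine .inr ⟨⁅p, σ⁆, conj_commutatorElement_of_mul_self_eq_one hσ p, ?_,
    ne_one_of_map (f := G.toPerm) ?_⟩
  · rw [conjugate_commutatorElement, conj_commutatorElement_of_mul_self_eq_one hτ h,
      hστ.symm.eq, mul_inv_cancel_right]
    exact commutatorElement_inv_left_of_commute hcomm
  · rw [map_pow, map_commutatorElement]
    exact hpW.commutatorElement_pow_ne_one hWσ hp4

theorem homeoSupp_inter_nonempty_iff (hG : IsClassF G) {σ τ : G} (hσ : σ * σ = 1)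
    (hτ : τ * τ = 1) :
    (homeoSupp (σ : X ≃ₜ X) ∩ homeoSupp (τ : X ≃ₜ X)).Nonempty ↔ AlgOverlap σ τ := by
  have hmoved : ∀ g : G, IsOpen {x | (g : X ≃ₜ X) x ≠ x} :=
    fun g => isOpen_ne_fun (g : X ≃ₜ X).continuous continuous_id
  constructor
  · intro hne
    rw [homeoSupp, closure_inter_open_nonempty_iff (hG.isClopen_homeoSupp hτ).isOpen, inter_comm,
      homeoSupp, closure_inter_open_nonempty_iff (hmoved σ)] at hne
    obtain ⟨z, hτz, hσz⟩ := hne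
    by_cases hστ : Commute σ τ
    swap
    · exact .inl hστ
    by_cases hpt : ∃ z, (σ : X ≃ₜ X) z ≠ z ∧ (τ : X ≃ₜ X) z ≠ z ∧ (σ : X ≃ₜ X) z ≠ (τ : X ≃ₜ X) z
    · obtain ⟨z, hσz, hτz, hστz⟩ := hpt
      exact hG.algOverlap_of_apply_ne hσ hτ hστ hσz hτz hστz
    · push Not at hpt
      exact hG.algOverlap_of_eqOn hσ hστ ((hmoved σ).inter (hmoved τ)) ⟨hσz, hτz⟩ hσz
        fun x hx => hpt x hx.1 hx.2
  · intro h
    by_contra hne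
    refine (Equiv.Perm.Disjoint.not_algOverlap (fun x => ?_) (map_mul_self_eq_one G.toPerm hσ)
      (map_mul_self_eq_one G.toPerm hτ)) (h.map G.toPerm_injective)
    by_contra hx
    push Not at hx
    exact hne ⟨x, subset_closure hx.1, subset_closure hx.2⟩

end IsClassF

section Realization

variable {X₁ X₂ : Type*} [TopologicalSpace X₁] [TopologicalSpace X₂]
  {G₁ : Subgroup (X₁ ≃ₜ X₁)} {G₂ : Subgroup (X₂ ≃ₜ X₂)}

/-- The set `P(x)` of the informal statement. -/
def realizationSet (α : G₁ ≃* G₂) (x : X₁) : Set X₂ :=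
  ⋂ g ∈ {g : G₁ | x ∈ homeoSupp (g : X₁ ≃ₜ X₁) ∧ g * g = 1}, homeoSupp (α g : X₂ ≃ₜ X₂)

def RealizesOnSupports (α : G₁ ≃* G₂) (φ : X₁ → X₂) : Prop :=
  ∀ g : G₁, g * g = 1 → ∀ x, x ∈ homeoSupp (g : X₁ ≃ₜ X₁) ↔ φ x ∈ homeoSupp (α g : X₂ ≃ₜ X₂)

section Stone

variable [CompactSpace X₁] [T2Space X₁] [TotallyDisconnectedSpace X₁]
  [CompactSpace X₂] [T2Space X₂] [TotallyDisconnectedSpace X₂]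

lemma homeoSupp_map_inter_nonempty_iff (hG₁ : IsClassF G₁) (hG₂ : IsClassF G₂) (α : G₁ ≃* G₂)
    {a b : G₁} (ha : a * a = 1) (hb : b * b = 1) :
    (homeoSupp (α a : X₂ ≃ₜ X₂) ∩ homeoSupp (α b : X₂ ≃ₜ X₂)).Nonempty ↔
      (homeoSupp (a : X₁ ≃ₜ X₁) ∩ homeoSupp (b : X₁ ≃ₜ X₁)).Nonempty := by
  rw [hG₂.homeoSupp_inter_nonempty_iff (α.mul_self_eq_one_iff.2 ha) (α.mul_self_eq_one_iff.2 hb),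
    α.algOverlap_iff, hG₁.homeoSupp_inter_nonempty_iff ha hb]

lemma homeoSupp_map_subset (hG₁ : IsClassF G₁) (hG₂ : IsClassF G₂) (α : G₁ ≃* G₂)
    {a b : G₁} (ha : a * a = 1) (hb : b * b = 1)
    (hab : homeoSupp (a : X₁ ≃ₜ X₁) ⊆ homeoSupp (b : X₁ ≃ₜ X₁)) :
    homeoSupp (α a : X₂ ≃ₜ X₂) ⊆ homeoSupp (α b : X₂ ≃ₜ X₂) := by
  rw [hG₂.homeoSupp_subset_iff (α.mul_self_eq_one_iff.2 ha) (α.mul_self_eq_one_iff.2 hb)]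
  intro k hk
  obtain ⟨g, rfl⟩ := α.surjective k
  have hg := α.mul_self_eq_one_iff.1 hk
  rw [homeoSupp_map_inter_nonempty_iff hG₁ hG₂ α hg ha,
    homeoSupp_map_inter_nonempty_iff hG₁ hG₂ α hg hb]
  exact (hG₁.homeoSupp_subset_iff ha hb).1 hab g hg

lemma realizationSet_nonempty (hG₁ : IsClassF G₁) (hG₂ : IsClassF G₂) (α : G₁ ≃* G₂) (x : X₁) :
    (realizationSet α x).Nonempty := by
  obtain ⟨g₀, hg₀, hxg₀, -⟩ := hG₁.exists_involution isClopen_univ (mem_univ x)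
  have : Nonempty {g : G₁ | x ∈ homeoSupp (g : X₁ ≃ₜ X₁) ∧ g * g = 1} := ⟨⟨g₀, hxg₀, hg₀⟩⟩
  have hclosed : ∀ g : {g : G₁ | x ∈ homeoSupp (g : X₁ ≃ₜ X₁) ∧ g * g = 1},
      IsClosed (homeoSupp (α g : X₂ ≃ₜ X₂)) :=
    fun g => (hG₂.isClopen_homeoSupp (α.mul_self_eq_one_iff.2 g.2.2)).isClosed
  rw [realizationSet, biInter_eq_iInter]
  refine IsCompact.nonempty_iInter_of_directed_nonempty_isCompact_isClosed _ ?_ ?_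
    (fun g => (hclosed g).isCompact) hclosed
  · rintro ⟨i, hxi, hi⟩ ⟨j, hxj, hj⟩
    obtain ⟨k, hk, hxk, hkij⟩ := hG₁.exists_involution
      ((hG₁.isClopen_homeoSupp hi).inter (hG₁.isClopen_homeoSupp hj)) ⟨hxi, hxj⟩
    exact ⟨⟨k, hxk, hk⟩, homeoSupp_map_subset hG₁ hG₂ α hk hi (hkij.trans inter_subset_left),
      homeoSupp_map_subset hG₁ hG₂ α hk hj (hkij.trans inter_subset_right)⟩
  · rintro ⟨g, hxg, hg⟩
    simpa using (homeoSupp_map_inter_nonempty_iff hG₁ hG₂ α hg hg).2 ⟨x, hxg, hxg⟩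

lemma mem_homeoSupp_iff_of_mem_realizationSet (hG₁ : IsClassF G₁) (hG₂ : IsClassF G₂)
    (α : G₁ ≃* G₂) {x : X₁} {y : X₂} (hy : y ∈ realizationSet α x) {g : G₁} (hg : g * g = 1) :
    x ∈ homeoSupp (g : X₁ ≃ₜ X₁) ↔ y ∈ homeoSupp (α g : X₂ ≃ₜ X₂) := by
  refine ⟨fun hxg => mem_iInter₂.1 hy g ⟨hxg, hg⟩, fun hyg => ?_⟩
  by_contra hxg
  obtain ⟨g₀, hg₀, hxg₀, hg₀g⟩ := hG₁.exists_involution (hG₁.isClopen_homeoSupp hg).compl hxg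
  obtain ⟨w, hw₀, hw⟩ := (homeoSupp_map_inter_nonempty_iff hG₁ hG₂ α hg₀ hg).1
    ⟨y, mem_iInter₂.1 hy g₀ ⟨hxg₀, hg₀⟩, hyg⟩
  exact hg₀g hw₀ hw

theorem exists_realizesOnSupports (hG₁ : IsClassF G₁) (hG₂ : IsClassF G₂) (α : G₁ ≃* G₂) :
    ∃ φ : X₁ → X₂, RealizesOnSupports α φ ∧ ∀ x, realizationSet α x = {φ x} := by
  choose φ hφ using realizationSet_nonempty hG₁ hG₂ α
  have hreal : RealizesOnSupports α φ :=
    fun g hg x => mem_homeoSupp_iff_of_mem_realizationSet hG₁ hG₂ α (hφ x) hg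
  refine ⟨φ, hreal, fun x => eq_singleton_iff_unique_mem.2 ⟨hφ x, fun y hy =>
    hG₂.eq_of_forall_mem_homeoSupp_iff fun k hk => ?_⟩⟩
  obtain ⟨g, rfl⟩ := α.surjective k
  have hg := α.mul_self_eq_one_iff.1 hk
  rw [← mem_homeoSupp_iff_of_mem_realizationSet hG₁ hG₂ α hy hg, hreal g hg x]

end Stone

namespace RealizesOnSupports

variable {α : G₁ ≃* G₂} {φ : X₁ → X₂}

lemma continuous [CompactSpace X₂] [T2Space X₂] [TotallyDisconnectedSpace X₂]
    (hG₁ : IsClassF G₁) (hG₂ : IsClassF G₂) (hφ : RealizesOnSupports α φ) : Continuous φ := by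
  refine continuous_def.2 fun U hU => isOpen_iff_forall_mem_open.2 fun x hx => ?_
  obtain ⟨k, hk, hxk, hkU⟩ := hG₂.exists_involution_of_isOpen hU hx
  obtain ⟨g, rfl⟩ := α.surjective k
  have hg := α.mul_self_eq_one_iff.1 hk
  exact ⟨homeoSupp (g : X₁ ≃ₜ X₁), fun x' hx' => hkU ((hφ g hg x').1 hx'),
    (hG₁.isClopen_homeoSupp hg).isOpen, (hφ g hg x).2 hxk⟩

lemma apply_eq [CompactSpace X₂] [T2Space X₂] [TotallyDisconnectedSpace X₂]
    (hG₂ : IsClassF G₂) (hφ : RealizesOnSupports α φ) (g : G₁) (x : X₁) :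
    (α g : X₂ ≃ₜ X₂) (φ x) = φ ((g : X₁ ≃ₜ X₁) x) := by
  refine hG₂.eq_of_forall_mem_homeoSupp_iff fun k hk => ?_
  obtain ⟨u, rfl⟩ := α.surjective k
  have hu := α.mul_self_eq_one_iff.1 hk
  have hconj : g⁻¹ * u * g * (g⁻¹ * u * g) = 1 := by
    calc g⁻¹ * u * g * (g⁻¹ * u * g) = g⁻¹ * (u * u) * g := by group
      _ = 1 := by rw [hu, mul_one, inv_mul_cancel]
  have h := hφ _ hconj x
  simp only [map_mul, map_inv, Subgroup.coe_mul, InvMemClass.coe_inv, homeoSupp_conj,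
    mem_preimage] at h
  exact h.symm.trans (hφ u hu _)

lemma leftInverse [CompactSpace X₁] [T2Space X₁] [TotallyDisconnectedSpace X₁]
    (hG₁ : IsClassF G₁) (hφ : RealizesOnSupports α φ) {ψ : X₂ → X₁}
    (hψ : RealizesOnSupports α.symm ψ) : LeftInverse ψ φ := fun x =>
  hG₁.eq_of_forall_mem_homeoSupp_iff fun g hg => by
    rw [hφ g hg x, hψ (α g) (α.mul_self_eq_one_iff.2 hg), α.symm_apply_apply]

end RealizesOnSupports

end Realization

section Cantor

variable {X : Type*} [TopologicalSpace X]

lemma IsCantorSpace.compactSpace (h : IsCantorSpace X) : CompactSpace X :=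
  h.some.symm.compactSpace

lemma IsCantorSpace.t2Space (h : IsCantorSpace X) : T2Space X :=
  h.some.symm.t2Space

lemma IsCantorSpace.totallyDisconnectedSpace (h : IsCantorSpace X) : TotallyDisconnectedSpace X :=
  h.some.symm.totallyDisconnectedSpace

end Cantor

/-- Matui. An isomorphism between class-F groups of homeomorphisms of
Cantor spaces is spatial, implemented by `x ↦` the unique point of
`P(x) = ⋂_{g ∈ T(x)} supp(α g)` with `T(x) = {g : x ∈ supp g, g² = 1}`. -/
theorem classF_spatial_realization {X₁ X₂ : Type*} [TopologicalSpace X₁] [TopologicalSpace X₂]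
    (hX₁ : IsCantorSpace X₁) (hX₂ : IsCantorSpace X₂)
    (G₁ : Subgroup (X₁ ≃ₜ X₁)) (G₂ : Subgroup (X₂ ≃ₜ X₂))
    (hF₁ : IsClassF G₁) (hF₂ : IsClassF G₂) (α : ↥G₁ ≃* ↥G₂) :
    ∃ h : X₁ ≃ₜ X₂,
      (∀ x : X₁, (⋂ g ∈ {g : ↥G₁ | x ∈ homeoSupp (↑g : X₁ ≃ₜ X₁) ∧ g * g = 1},
          homeoSupp (↑(α g) : X₂ ≃ₜ X₂)) = {h x}) ∧
      ∀ (g : ↥G₁) (x : X₁), (↑(α g) : X₂ ≃ₜ X₂) (h x) = h ((↑g : X₁ ≃ₜ X₁) x) := by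
  have := hX₁.compactSpace
  have := hX₁.t2Space
  have := hX₁.totallyDisconnectedSpace
  have := hX₂.compactSpace
  have := hX₂.t2Space
  have := hX₂.totallyDisconnectedSpace
  obtain ⟨φ, hφ, hφP⟩ := exists_realizesOnSupports hF₁ hF₂ α
  obtain ⟨ψ, hψ, -⟩ := exists_realizesOnSupports hF₂ hF₁ α.symm
  exact ⟨⟨⟨φ, ψ, hφ.leftInverse hF₁ hψ, hψ.leftInverse hF₂ hφ⟩, hφ.continuous hF₁ hF₂,
    hψ.continuous hF₂ hF₁⟩, hφP, hφ.apply_eq hF₂⟩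
end

section
/- Let (X,φ) be a minimal Cantor system. Then the topological full group 𝔗(φ) is a LEF group: for every finite subset F ⊆ 𝔗(φ) there exist a finite group H and a map α : 𝔗(φ) → H such that α(γ₁γ₂) = α(γ₁)α(γ₂) for all γ₁, γ₂ ∈ F, and the restriction of α to F is injective. -/
open Filter Function Set
open scoped omegaLimit

noncomputable def cyclicApprox (M : ℕ) (g : ℤ → ℤ) (z : ZMod M) : ZMod M :=
  z + g z.val

section cyclicApprox

variable {M N : ℕ}

lemma apply_emod_eq_of_window {g : ℤ → ℤ} {R : ℤ} (hRM : R ≤ M)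
    (hwin : ∀ k ∈ Ico (-R) R, g (k + M) = g k) : ∀ n ∈ Ico (-R) (M + R), g (n % M) = g n := by
  rintro n ⟨hn₁, hn₂⟩
  rcases lt_or_ge n 0 with hneg | hnonneg
  · rw [← Int.add_emod_right, Int.emod_eq_of_lt (by omega) (by omega), hwin n ⟨hn₁, by omega⟩]
  rcases lt_or_ge n M with hlt | hge
  · rw [Int.emod_eq_of_lt hnonneg hlt]
  · rw [← Int.sub_emod_right, Int.emod_eq_of_lt (by omega) (by omega),
      ← hwin (n - M) ⟨by omega, by omega⟩, sub_add_cancel]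

lemma cyclicApprox_intCast [NeZero M] (g : ℤ → ℤ) (n : ℤ) :
    cyclicApprox M g n = ((n + g (n % M) : ℤ) : ZMod M) := by
  rw [cyclicApprox, ZMod.val_intCast]
  push_cast
  rfl

lemma ZMod.exists_mem_Ico_intCast_eq [NeZero M] (z : ZMod M) : ∃ a ∈ Ico (0 : ℤ) M, z = a :=
  ⟨z.val, ⟨by positivity, by exact_mod_cast z.val_lt⟩, by simp⟩

lemma injective_cyclicApprox [NeZero M] {g : ℤ → ℤ} (hg : ∀ n, |g n| ≤ N)
    (hinj : Injective fun n => n + g n)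
    (hper : ∀ n ∈ Ico (-(2 * N : ℤ)) (M + 2 * N), g (n % M) = g n) :
    Injective (cyclicApprox M g) := by
  intro z z' h
  obtain ⟨a, ⟨ha₀, haM⟩, rfl⟩ := ZMod.exists_mem_Ico_intCast_eq z
  obtain ⟨a', ⟨ha₀', haM'⟩, rfl⟩ := ZMod.exists_mem_Ico_intCast_eq z'
  rw [cyclicApprox_intCast, cyclicApprox_intCast, Int.emod_eq_of_lt ha₀ haM,
    Int.emod_eq_of_lt ha₀' haM', ZMod.intCast_eq_intCast_iff] at h
  -- `b ≡ a` is the point with the same image as `a'` under `n ↦ n + g n`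
  set b := a' + g a' - g a
  have hba : b % M = a := by
    rw [show b ≡ a [ZMOD M] by simpa [b] using h.symm.sub_right (g a)]
    exact Int.emod_eq_of_lt ha₀ haM
  have hb : b = a' := by
    have := abs_le.mp (hg a)
    have := abs_le.mp (hg a')
    refine hinj ?_
    simp only
    rw [← hper b ⟨by omega, by omega⟩, hba]
    ring
  rw [ZMod.intCast_eq_intCast_iff, ← hb]
  exact (hba.trans (Int.emod_eq_of_lt ha₀ haM).symm).symm

lemma cyclicApprox_comp [NeZero M] {g g₁ g₂ : ℤ → ℤ} (hg₂ : ∀ n, |g₂ n| ≤ N)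
    (hper₁ : ∀ n ∈ Ico (-(N : ℤ)) (M + N), g₁ (n % M) = g₁ n)
    (hg : ∀ n, g n = g₁ (n + g₂ n) + g₂ n) :
    cyclicApprox M g = cyclicApprox M g₁ ∘ cyclicApprox M g₂ := by
  funext z
  obtain ⟨a, ⟨ha₀, haM⟩, rfl⟩ := ZMod.exists_mem_Ico_intCast_eq z
  have := abs_le.mp (hg₂ a)
  simp only [comp_apply, cyclicApprox_intCast, Int.emod_eq_of_lt ha₀ haM,
    hper₁ (a + g₂ a) ⟨by omega, by omega⟩, hg]
  push_cast
  ring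

lemma eqOn_of_cyclicApprox_eq [NeZero M] {g₁ g₂ : ℤ → ℤ} (hNM : 2 * N < M)
    (hg₁ : ∀ n, |g₁ n| ≤ N) (hg₂ : ∀ n, |g₂ n| ≤ N)
    (h : cyclicApprox M g₁ = cyclicApprox M g₂) : EqOn g₁ g₂ (Ico 0 M) := by
  rintro a ⟨ha₀, haM⟩
  have hdvd := congrFun h a
  rw [cyclicApprox_intCast, cyclicApprox_intCast, Int.emod_eq_of_lt ha₀ haM,
    ZMod.intCast_eq_intCast_iff_dvd_sub] at hdvd
  have := abs_le.mp (hg₁ a)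
  have := abs_le.mp (hg₂ a)
  have := Int.eq_zero_of_abs_lt_dvd hdvd (abs_lt.mpr ⟨by omega, by omega⟩)
  omega

end cyclicApprox

lemma exists_perm_mul_injOn {G A : Type*} [Mul G] [Finite A] (u : G → A → A) {F : Set G}
    (hinj : ∀ γ ∈ F, Injective (u γ)) (hmul : ∀ γ₁ ∈ F, ∀ γ₂ ∈ F, u (γ₁ * γ₂) = u γ₁ ∘ u γ₂)
    (hsep : InjOn u F) :
    ∃ α : G → Equiv.Perm A, (∀ γ₁ ∈ F, ∀ γ₂ ∈ F, α (γ₁ * γ₂) = α γ₁ * α γ₂) ∧ InjOn α F := by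
  classical
  let α : G → Equiv.Perm A := fun γ =>
    if h : Injective (u γ) then Equiv.ofBijective _ (Finite.injective_iff_bijective.mp h) else 1
  have hα : ∀ γ, Injective (u γ) → ⇑(α γ) = u γ := fun γ h => by simp [α, h]
  refine ⟨α, fun γ₁ h₁ γ₂ h₂ => ?_, fun γ₁ h₁ γ₂ h₂ h => hsep h₁ h₂ ?_⟩
  · have h₁₂ : Injective (u (γ₁ * γ₂)) := hmul γ₁ h₁ γ₂ h₂ ▸ (hinj γ₁ h₁).comp (hinj γ₂ h₂)
    apply DFunLike.coe_injective
    rw [Equiv.Perm.coe_mul, hα _ h₁₂, hα _ (hinj γ₁ h₁), hα _ (hinj γ₂ h₂), hmul γ₁ h₁ γ₂ h₂]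
  · rw [← hα _ (hinj γ₁ h₁), ← hα _ (hinj γ₂ h₂), h]

section Dynamics

variable {X : Type*} [TopologicalSpace X] {φ : X ≃ₜ X}

lemma IsMinimalHomeo.zpow_apply_injective [T1Space X] [Infinite X] (hmin : IsMinimalHomeo φ)
    (x : X) :
    Injective fun n : ℤ => (φ ^ n) x := by
  intro k j h
  by_contra hne
  wlog hjk : j < k generalizing k j
  · exact this h.symm (Ne.symm hne) (lt_of_le_of_ne (not_lt.mp hjk) hne)
  have h : (φ ^ k) x = (φ ^ j) x := h
  have hper : Periodic (fun n : ℤ => (φ ^ n) x) (k - j) := fun n => by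
    simp only
    rw [show n + (k - j) = n - j + k by ring, homeo_zpow_add_apply, h, ← homeo_zpow_add_apply,
      sub_add_cancel]
  have hfin : (range fun n : ℤ => (φ ^ n) x).Finite :=
    ((finite_Ico 0 (k - j)).image _).subset <| by
      rintro _ ⟨n, rfl⟩
      obtain ⟨m, hm, hnm⟩ := hper.exists_mem_Ico₀ (sub_pos.mpr hjk) n
      exact ⟨m, hm, hnm.symm⟩
  have hrange : (range fun n : ℤ => (φ ^ n) x) = univ := by
    rw [← hfin.isClosed.closure_eq, (hmin x).closure_eq]
  exact infinite_univ (hrange ▸ hfin)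

def Homeomorph.zpowFlow (φ : X ≃ₜ X) : Flow ℤ X where
  toFun n := ⇑(φ ^ n)
  cont' := continuous_prod_of_discrete_left.mpr fun n => (φ ^ n).continuous
  map_add' := homeo_zpow_add_apply φ
  map_zero' x := by rw [zpow_zero]; rfl

lemma IsMinimalHomeo.frequently_zpow_apply_mem [CompactSpace X] (hmin : IsMinimalHomeo φ) (x : X)
    {U : Set X} (hU : IsOpen U) (hne : U.Nonempty) : ∃ᶠ n : ℤ in atTop, (φ ^ n) x ∈ U := by
  set ϕ := φ.zpowFlow
  have hinv : IsInvariant ϕ (ω atTop ϕ {x}) :=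
    ϕ.isInvariant_omegaLimit _ _ fun t => tendsto_atTop_add_const_left _ t tendsto_id
  obtain ⟨z, hz⟩ := nonempty_omegaLimit atTop ϕ {x} (singleton_nonempty x)
  -- the ω-limit set is closed and contains the dense orbit of `z`
  have hω : ω atTop ϕ {x} = univ := by
    refine eq_univ_of_univ_subset ?_
    rw [← (hmin z).closure_eq]
    exact closure_minimal (range_subset_iff.mpr fun n => hinv n hz)
      (isClosed_omegaLimit _ _ _)
  obtain ⟨y, hy⟩ := hne
  have := (mem_omegaLimit_iff_frequently _ _ _ y).mp (hω ▸ mem_univ y) U (hU.mem_nhds hy)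
  exact this.mono fun n ⟨_, hx, hn⟩ => (mem_singleton_iff.mp hx) ▸ hn

end Dynamics

namespace topFullGroup

variable {X : Type*} [TopologicalSpace X] {φ : X ≃ₜ X}

noncomputable def cocycle (γ : topFullGroup φ) : X → ℤ :=
  Classical.choose γ.2

lemma continuous_cocycle (γ : topFullGroup φ) : Continuous (cocycle γ) :=
  (Classical.choose_spec γ.2).1

lemma apply_eq_zpow_cocycle (γ : topFullGroup φ) (y : X) :
    (γ : X ≃ₜ X) y = (φ ^ cocycle γ y) y :=
  (Classical.choose_spec γ.2).2 y

lemma cocycle_mul [T1Space X] [Infinite X] (hmin : IsMinimalHomeo φ) (γ₁ γ₂ : topFullGroup φ)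
    (y : X) : cocycle (γ₁ * γ₂) y = cocycle γ₁ ((γ₂ : X ≃ₜ X) y) + cocycle γ₂ y :=
  hmin.zpow_apply_injective y <| by
    simp only
    rw [← apply_eq_zpow_cocycle, homeo_zpow_add_apply, ← apply_eq_zpow_cocycle,
      ← apply_eq_zpow_cocycle]
    rfl

lemma exists_abs_cocycle_le [CompactSpace X] (F : Finset (topFullGroup φ)) :
    ∃ N : ℕ, ∀ γ ∈ F, ∀ y, |cocycle γ y| ≤ N := by
  have hbdd (γ : topFullGroup φ) : ∃ N : ℕ, ∀ y, |cocycle γ y| ≤ N := by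
    have hfin := (IsLocallyConstant.iff_continuous _).mpr (continuous_cocycle γ) |>.range_finite
    obtain ⟨N, hN⟩ := (hfin.image Int.natAbs).bddAbove
    exact ⟨N, fun y => by rw [Int.abs_eq_natAbs]; exact_mod_cast hN ⟨_, ⟨y, rfl⟩, rfl⟩⟩
  choose N hN using hbdd
  exact ⟨F.sup N, fun γ hγ y => (hN γ y).trans (by exact_mod_cast F.le_sup hγ)⟩

noncomputable def orbitCocycle (x : X) (γ : topFullGroup φ) (n : ℤ) : ℤ :=
  cocycle γ ((φ ^ n) x)

lemma apply_zpow_apply (x : X) (γ : topFullGroup φ) (n : ℤ) :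
    (γ : X ≃ₜ X) ((φ ^ n) x) = (φ ^ (n + orbitCocycle x γ n)) x := by
  rw [apply_eq_zpow_cocycle, add_comm, homeo_zpow_add_apply]
  rfl

lemma injective_add_orbitCocycle [T1Space X] [Infinite X] (hmin : IsMinimalHomeo φ) (x : X)
    (γ : topFullGroup φ) : Injective fun n => n + orbitCocycle x γ n := fun n n' h =>
  hmin.zpow_apply_injective x <| (γ : X ≃ₜ X).injective <| by
    simp only [apply_zpow_apply] at h ⊢
    rw [h]

lemma orbitCocycle_mul [T1Space X] [Infinite X] (hmin : IsMinimalHomeo φ) (x : X)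
    (γ₁ γ₂ : topFullGroup φ) (n : ℤ) :
    orbitCocycle x (γ₁ * γ₂) n =
      orbitCocycle x γ₁ (n + orbitCocycle x γ₂ n) + orbitCocycle x γ₂ n := by
  rw [orbitCocycle, cocycle_mul hmin, apply_zpow_apply]
  rfl

lemma eventually_eq_of_eqOn_orbitCocycle [CompactSpace X] (hmin : IsMinimalHomeo φ) (x : X)
    (γ₁ γ₂ : topFullGroup φ) :
    ∀ᶠ M : ℤ in atTop, EqOn (orbitCocycle x γ₁) (orbitCocycle x γ₂) (Ico 0 M) → γ₁ = γ₂ := by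
  by_cases heq : γ₁ = γ₂
  · exact .of_forall fun _ _ => heq
  obtain ⟨y, hy⟩ : ∃ y, cocycle γ₁ y ≠ cocycle γ₂ y := by
    by_contra! h
    exact heq <| Subtype.ext <| Homeomorph.ext fun y => by
      rw [apply_eq_zpow_cocycle, apply_eq_zpow_cocycle, h]
  have hU := isOpen_ne_fun (continuous_cocycle γ₁) (continuous_cocycle γ₂)
  obtain ⟨n, hn, hn₀⟩ :=
    ((hmin.frequently_zpow_apply_mem x hU ⟨y, hy⟩).and_eventually
      (eventually_ge_atTop 0)).exists
  filter_upwards [eventually_gt_atTop n] with M hM hM'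
  exact absurd (hM' ⟨hn₀, hM⟩) hn

lemma frequently_orbitCocycle_window [CompactSpace X] (hmin : IsMinimalHomeo φ) (x : X)
    (F : Finset (topFullGroup φ)) (R : ℤ) :
    ∃ᶠ M : ℤ in atTop,
      ∀ γ ∈ F, ∀ k ∈ Ico (-R) R, orbitCocycle x γ (k + M) = orbitCocycle x γ k := by
  let W := ⋂ γ ∈ F, ⋂ k ∈ Ico (-R) R, {y | cocycle γ ((φ ^ k) y) = orbitCocycle x γ k}
  have hW : IsOpen W := isOpen_biInter_finset fun γ _ => (finite_Ico _ _).isOpen_biInter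
    fun k _ => ((continuous_cocycle γ).comp (φ ^ k).continuous).isOpen_preimage
      {orbitCocycle x γ k} (isOpen_discrete _)
  refine (hmin.frequently_zpow_apply_mem x hW ⟨x, ?_⟩).mono fun M hM γ hγ k hk => ?_
  · simp only [W, mem_iInter]
    exact fun _ _ _ _ => rfl
  · simp only [W, mem_iInter] at hM
    rw [← hM γ hγ k hk, orbitCocycle, homeo_zpow_add_apply]

theorem exists_zmod_approx [CompactSpace X] [T1Space X] [Infinite X] (hmin : IsMinimalHomeo φ)
    (F : Finset (topFullGroup φ)) :
    ∃ (M : ℕ) (_ : NeZero M) (u : topFullGroup φ → ZMod M → ZMod M),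
      (∀ γ ∈ F, Injective (u γ)) ∧ (∀ γ₁ ∈ F, ∀ γ₂ ∈ F, u (γ₁ * γ₂) = u γ₁ ∘ u γ₂) ∧
        InjOn u F := by
  obtain ⟨x⟩ := (inferInstance : Nonempty X)
  obtain ⟨N, hN⟩ := exists_abs_cocycle_le F
  have hsep : ∀ᶠ M : ℤ in atTop, ∀ γ₁ ∈ F, ∀ γ₂ ∈ F,
      EqOn (orbitCocycle x γ₁) (orbitCocycle x γ₂) (Ico 0 M) → γ₁ = γ₂ := by
    simp only [eventually_all_finset]
    exact fun γ₁ _ γ₂ _ => eventually_eq_of_eqOn_orbitCocycle hmin x γ₁ γ₂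
  obtain ⟨M, hwin, hMsep, hNM⟩ :=
    ((frequently_orbitCocycle_window hmin x F (2 * N)).and_eventually
      (hsep.and (eventually_gt_atTop (2 * N : ℤ)))).exists
  lift M to ℕ using by omega
  have : NeZero M := ⟨by omega⟩
  have hbound (γ) (hγ : γ ∈ F) (n : ℤ) : |orbitCocycle x γ n| ≤ N := hN γ hγ _
  have hper (γ) (hγ : γ ∈ F) :=
    apply_emod_eq_of_window (M := M) (R := 2 * N) (by omega) (hwin γ hγ)
  refine ⟨M, inferInstance, fun γ => cyclicApprox M (orbitCocycle x γ),
    fun γ hγ => injective_cyclicApprox (hbound γ hγ) (injective_add_orbitCocycle hmin x γ)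
      (hper γ hγ),
    fun γ₁ h₁ γ₂ h₂ => cyclicApprox_comp (hbound γ₂ h₂)
      (fun n ⟨hn₁, hn₂⟩ => hper γ₁ h₁ n ⟨by omega, by omega⟩) (orbitCocycle_mul hmin x γ₁ γ₂),
    fun γ₁ h₁ γ₂ h₂ h => hMsep γ₁ h₁ γ₂ h₂ ?_⟩
  exact eqOn_of_cyclicApprox_eq (by omega) (hbound γ₁ h₁) (hbound γ₂ h₂) h

end topFullGroup

/-- Grigorchuk–Medynets. The topological full group of a minimal Cantor
system is LEF: every finite subset admits a multiplicative injection into a finite group. -/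
theorem topFullGroup_LEF {X : Type*} [TopologicalSpace X]
    (hX : IsCantorSpace X) (φ : X ≃ₜ X) (hmin : IsMinimalHomeo φ) :
    ∀ F : Finset ↥(topFullGroup φ),
      ∃ (H : Type) (_ : Group H) (_ : Finite H) (α : ↥(topFullGroup φ) → H),
        (∀ γ₁ ∈ F, ∀ γ₂ ∈ F, α (γ₁ * γ₂) = α γ₁ * α γ₂) ∧ Set.InjOn α ↑F := by
  intro F
  obtain ⟨e⟩ := hX
  have : CompactSpace X := e.symm.compactSpace
  have : T2Space X := e.symm.t2Space
  have : Infinite X := e.toEquiv.infinite_iff.mpr inferInstance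
  obtain ⟨M, _, u, hinj, hmul, hsep⟩ := topFullGroup.exists_zmod_approx hmin F
  obtain ⟨α, hα⟩ := exists_perm_mul_injOn u hinj hmul hsep
  exact ⟨Equiv.Perm (ZMod M), inferInstance, inferInstance, α, hα⟩
end

section
/- Let a group G act extensively amenably on a set X. Then for every subgroup H ≤ G and every H-orbit Y ⊆ X, the induced action of H on Y is extensively amenable. -/
/-- An action of `G` on `X` is *extensively amenable* if there is an invariant mean on the
set `𝒫_f(X)` of finite subsets of `X` giving full weight to `{A : B ⊆ A}` for each finite
`B`. -/
def IsExtensivelyAmenable (G : Type*) (X : Type*) [Group G] [MulAction G X] : Prop :=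
  ∃ m : Set {s : Set X // s.Finite} → ℝ,
    (∀ 𝒜, 0 ≤ m 𝒜) ∧
    m Set.univ = 1 ∧
    (∀ 𝒜 ℬ : Set {s : Set X // s.Finite}, Disjoint 𝒜 ℬ → m (𝒜 ∪ ℬ) = m 𝒜 + m ℬ) ∧
    (∀ (g : G) (𝒜 : Set {s : Set X // s.Finite}),
      m ((fun A : {s : Set X // s.Finite} =>
        (⟨(g • ·) '' A.1, A.2.image _⟩ : {s : Set X // s.Finite})) '' 𝒜) = m 𝒜) ∧
    (∀ B : {s : Set X // s.Finite}, m {A : {s : Set X // s.Finite} | B.1 ⊆ A.1} = 1)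

/-- Extensive amenability passes to the action of a subgroup on any of
its orbits. -/
theorem extensivelyAmenable_restriction {G X : Type*} [Group G] [MulAction G X]
    (h : IsExtensivelyAmenable G X) (H : Subgroup G) (y : X) :
    IsExtensivelyAmenable ↥H ↥(MulAction.orbit H y) := by
  classical
  obtain ⟨m, hpos, huniv, hadd, hinv, hfull⟩ := h
  set Y := MulAction.orbit H y with hY
  -- restriction map on finite subsets
  let φ : {s : Set X // s.Finite} → {s : Set Y // s.Finite} :=
    fun A => ⟨Subtype.val ⁻¹' A.1, A.2.preimage Subtype.val_injective.injOn⟩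
  -- monotonicity of m
  have hmono : ∀ S T : Set {s : Set X // s.Finite}, S ⊆ T → m S ≤ m T := by
    intro S T hST
    have hT : m T = m S + m (T \ S) := by
      rw [← hadd S (T \ S) Set.disjoint_sdiff_right, Set.union_diff_cancel hST]
    have := hpos (T \ S)
    linarith
  -- image maps
  let ΨX : G → {s : Set X // s.Finite} → {s : Set X // s.Finite} :=
    fun g A => ⟨(g • ·) '' A.1, A.2.image _⟩
  let ΨY : ↥H → {s : Set Y // s.Finite} → {s : Set Y // s.Finite} :=
    fun g A => ⟨(g • ·) '' A.1, A.2.image _⟩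
  have hΨXinv : ∀ (g : G) A, ΨX g⁻¹ (ΨX g A) = A := by
    intro g A
    apply Subtype.ext
    simp only [ΨX, Set.image_image, inv_smul_smul, Set.image_id']
  have hΨYinv : ∀ (g : ↥H) A, ΨY g⁻¹ (ΨY g A) = A := by
    intro g A
    apply Subtype.ext
    simp only [ΨY, Set.image_image, inv_smul_smul, Set.image_id']
  -- commutation : φ ∘ ΨX g = ΨY g ∘ φ for g in H
  have hcomm : ∀ (g : ↥H) A, φ (ΨX (g : G) A) = ΨY g (φ A) := by
    intro g A
    apply Subtype.ext
    ext z
    simp only [φ, ΨX, ΨY, Set.mem_preimage, Set.mem_image]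
    constructor
    · rintro ⟨x, hx, hgx⟩
      have hxY : x ∈ Y := by
        have h1 : (g : G)⁻¹ • (z : X) ∈ Y := ((g⁻¹ : ↥H) • z).2
        rwa [← hgx, inv_smul_smul] at h1
      refine ⟨⟨x, hxY⟩, hx, ?_⟩
      apply Subtype.ext
      exact hgx
    · rintro ⟨w, hw, hgw⟩
      exact ⟨(w : X), hw, by rw [← hgw]; rfl⟩
  refine ⟨fun 𝒜 => m (φ ⁻¹' 𝒜), fun 𝒜 => hpos _, by simpa using huniv, ?_, ?_, ?_⟩
  · intro 𝒜 ℬ hd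
    show m (φ ⁻¹' (𝒜 ∪ ℬ)) = m (φ ⁻¹' 𝒜) + m (φ ⁻¹' ℬ)
    rw [Set.preimage_union]
    exact hadd _ _ (hd.preimage φ)
  · intro g 𝒜
    have key : φ ⁻¹' (ΨY g '' 𝒜) = ΨX (g : G) '' (φ ⁻¹' 𝒜) := by
      ext A
      simp only [Set.mem_preimage, Set.mem_image]
      constructor
      · rintro ⟨B, hB, hBA⟩
        refine ⟨ΨX (g : G)⁻¹ A, ?_, ?_⟩
        · show φ (ΨX (g : G)⁻¹ A) ∈ 𝒜
          have : ((g : G))⁻¹ = ((g⁻¹ : ↥H) : G) := rfl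
          rw [this, hcomm g⁻¹ A, ← hBA, hΨYinv g B]
          exact hB
        · have := hΨXinv (g : G)⁻¹ A
          rwa [inv_inv] at this
      · rintro ⟨B, hB, rfl⟩
        exact ⟨φ B, hB, (hcomm g B).symm⟩
    show m (φ ⁻¹' (ΨY g '' 𝒜)) = m (φ ⁻¹' 𝒜)
    rw [key, hinv (g : G)]
  · intro B
    set Bx : {s : Set X // s.Finite} := ⟨Subtype.val '' B.1, B.2.image _⟩ with hBx
    have hsub : {A : {s : Set X // s.Finite} | Bx.1 ⊆ A.1}
        ⊆ φ ⁻¹' {A : {s : Set Y // s.Finite} | B.1 ⊆ A.1} := by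
      intro A hA
      intro b hb
      exact hA ⟨b, hb, rfl⟩
    have h1 : (1 : ℝ) ≤ m (φ ⁻¹' {A : {s : Set Y // s.Finite} | B.1 ⊆ A.1}) := by
      rw [← hfull Bx]
      exact hmono _ _ hsub
    have h2 : m (φ ⁻¹' {A : {s : Set Y // s.Finite} | B.1 ⊆ A.1}) ≤ 1 := by
      rw [← huniv]
      exact hmono _ _ (Set.subset_univ _)
    linarith
end
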